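/- arXiv:2211.16413 — 7 statements merged into one kernel-verified Lean document; each statement's English description precedes it below -/
import Mathlib

section
/- The relation h₀ on ℤⁿ × Iⁿ satisfies: (z, i) is h₀-related to (z', i') if and only if z + i = z' + i' in ℝⁿ. In particular h₀ is an equivalence relation, the addition map s : ℤⁿ × Iⁿ → ℝⁿ, s(z, i) = z + i, is a (surjective) quotient map whose fibers are exactly the h₀-classes, and s descends to a homeomorphism (ℤⁿ × Iⁿ)/h₀ ≅ ℝⁿ. -/
open Set

noncomputable section

/-- `A₀(i)`: the set of coordinates where `i` equals `1`. -/
def Aset (n : ℕ) (i : Fin n → unitInterval) : Set (Fin n) := {k | (i k : ℝ) = 1}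

/-- `B₀(i)`: the set of coordinates where `i` equals `0`. -/
def Bset (n : ℕ) (i : Fin n → unitInterval) : Set (Fin n) := {k | (i k : ℝ) = 0}

open Classical in
/-- `ψ_A(i)`: replace `i k` by `1 - i k` for every `k ∈ A`. -/
def psiFlip (n : ℕ) (A : Set (Fin n)) (i : Fin n → unitInterval) : Fin n → unitInterval :=
  fun k => if k ∈ A then unitInterval.symm (i k) else i k

open Classical in
/-- `1_S`: the indicator vector of `S` in `ℤⁿ`. -/
def indVec (n : ℕ) (S : Set (Fin n)) : Fin n → ℤ := fun k => if k ∈ S then 1 else 0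

/-- The relation `h₀` on `ℤⁿ × Iⁿ`. -/
def rel0 (n : ℕ) (x y : (Fin n → ℤ) × (Fin n → unitInterval)) : Prop :=
  ∃ A B : Set (Fin n), A ⊆ Aset n x.2 ∧ B ⊆ Bset n x.2 ∧
    y.1 = x.1 + indVec n A - indVec n B ∧ y.2 = psiFlip n (A ∪ B) x.2

/-- The addition map `s : ℤⁿ × Iⁿ → ℝⁿ`, `s(z, i) = z + i`. -/
def addMap (n : ℕ) (x : (Fin n → ℤ) × (Fin n → unitInterval)) : Fin n → ℝ :=
  fun k => (x.1 k : ℝ) + (x.2 k : ℝ)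

lemma rel0_iff (n : ℕ) (x y : (Fin n → ℤ) × (Fin n → unitInterval)) :
    rel0 n x y ↔ addMap n x = addMap n y := by
  constructor
  · rintro ⟨A, B, hA, hB, hz, hi⟩
    funext k
    have hzk : y.1 k = x.1 k + indVec n A k - indVec n B k := by rw [hz]; simp
    have hik : y.2 k = psiFlip n (A ∪ B) x.2 k := by rw [hi]
    simp only [addMap, hzk, hik, psiFlip, indVec]
    by_cases hkA : k ∈ A
    · have h1 : (x.2 k : ℝ) = 1 := hA hkA
      have hkB : k ∉ B := fun hkB => by
        have h0 : (x.2 k : ℝ) = 0 := hB hkB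
        norm_num [h1] at h0
      rw [if_pos hkA, if_neg hkB, if_pos (Set.mem_union_left _ hkA)]
      push_cast [unitInterval.coe_symm_eq, h1]
      ring
    · by_cases hkB : k ∈ B
      · have h0 : (x.2 k : ℝ) = 0 := hB hkB
        rw [if_neg hkA, if_pos hkB, if_pos (Set.mem_union_right _ hkB)]
        push_cast [unitInterval.coe_symm_eq, h0]
        ring
      · rw [if_neg hkA, if_neg hkB, if_neg (by simp [hkA, hkB])]
        push_cast
        ring
  · intro h
    have hk : ∀ k, (x.1 k : ℝ) + (x.2 k : ℝ) = (y.1 k : ℝ) + (y.2 k : ℝ) := fun k =>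
      congrFun h k
    refine ⟨{k | y.1 k = x.1 k + 1}, {k | y.1 k = x.1 k - 1}, ?_, ?_, ?_, ?_⟩
    · intro k hkA
      have : (y.1 k : ℝ) = (x.1 k : ℝ) + 1 := by exact_mod_cast congrArg (Int.cast : ℤ → ℝ) hkA
      show (x.2 k : ℝ) = 1
      linarith [hk k, (y.2 k).2.1, (x.2 k).2.2]
    · intro k hkB
      have : (y.1 k : ℝ) = (x.1 k : ℝ) - 1 := by exact_mod_cast congrArg (Int.cast : ℤ → ℝ) hkB
      show (x.2 k : ℝ) = 0
      linarith [hk k, (y.2 k).2.2, (x.2 k).2.1]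
    · funext k
      have hd : y.1 k = x.1 k ∨ y.1 k = x.1 k + 1 ∨ y.1 k = x.1 k - 1 := by
        have h1 : (y.1 k : ℝ) - (x.1 k : ℝ) = (x.2 k : ℝ) - (y.2 k : ℝ) := by
          have := hk k; linarith
        have hle : ((y.1 k - x.1 k : ℤ) : ℝ) ≤ 1 := by
          push_cast
          have := (x.2 k).2.2; have := (y.2 k).2.1; linarith
        have hge : (-1 : ℝ) ≤ ((y.1 k - x.1 k : ℤ) : ℝ) := by
          push_cast
          have := (x.2 k).2.1; have := (y.2 k).2.2; linarith
        have hle' : y.1 k - x.1 k ≤ 1 := by exact_mod_cast hle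
        have hge' : (-1 : ℤ) ≤ y.1 k - x.1 k := by exact_mod_cast hge
        omega
      simp only [Pi.sub_apply, Pi.add_apply, indVec, Set.mem_setOf_eq]
      rcases hd with h0 | h1 | hm1
      · rw [if_neg (by omega), if_neg (by omega)]
        omega
      · rw [if_pos h1, if_neg (by omega)]
        omega
      · rw [if_neg (by omega), if_pos hm1]
        omega
    · funext k
      have heq : (y.2 k : ℝ) = (x.2 k : ℝ) + (x.1 k : ℝ) - (y.1 k : ℝ) := by
        have := hk k; linarith
      simp only [psiFlip]
      by_cases hkU : k ∈ ({k | y.1 k = x.1 k + 1} ∪ {k | y.1 k = x.1 k - 1} : Set (Fin n))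
      · rw [if_pos hkU]
        apply Subtype.ext
        rw [unitInterval.coe_symm_eq, heq]
        rcases hkU with h1 | hm1
        · have : (y.1 k : ℝ) = (x.1 k : ℝ) + 1 := by exact_mod_cast congrArg (Int.cast : ℤ → ℝ) h1
          -- x.2 k = 1 here
          have hx1 : (x.2 k : ℝ) = 1 := by
            have := (y.2 k).2.1; have := (x.2 k).2.2; linarith [heq]
          linarith
        · have : (y.1 k : ℝ) = (x.1 k : ℝ) - 1 := by
            exact_mod_cast congrArg (Int.cast : ℤ → ℝ) hm1
          have hx0 : (x.2 k : ℝ) = 0 := by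
            have := (y.2 k).2.2; have := (x.2 k).2.1; linarith [heq]
          linarith
      · rw [if_neg hkU]
        apply Subtype.ext
        rw [heq]
        simp only [Set.mem_union, Set.mem_setOf_eq, not_or] at hkU
        have hd : y.1 k = x.1 k ∨ y.1 k = x.1 k + 1 ∨ y.1 k = x.1 k - 1 := by
          have hle : ((y.1 k - x.1 k : ℤ) : ℝ) ≤ 1 := by
            push_cast
            have := (x.2 k).2.2; have := (y.2 k).2.1; linarith
          have hge : (-1 : ℝ) ≤ ((y.1 k - x.1 k : ℤ) : ℝ) := by
            push_cast
            have := (x.2 k).2.1; have := (y.2 k).2.2; linarith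
          have hle' : y.1 k - x.1 k ≤ 1 := by exact_mod_cast hle
          have hge' : (-1 : ℤ) ≤ y.1 k - x.1 k := by exact_mod_cast hge
          omega
        have h0 : y.1 k = x.1 k := by tauto
        rw [h0]; ring

lemma addMap_continuous (n : ℕ) : Continuous (addMap n) := by
  apply continuous_pi
  intro k
  have h1 : Continuous fun x : (Fin n → ℤ) × (Fin n → unitInterval) => ((x.1 k : ℤ) : ℝ) :=
    (continuous_of_discreteTopology (f := fun z : ℤ => (z : ℝ))).comp
      ((continuous_apply k).comp continuous_fst)
  have h2 : Continuous fun x : (Fin n → ℤ) × (Fin n → unitInterval) => ((x.2 k : unitInterval) : ℝ) :=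
    continuous_subtype_val.comp ((continuous_apply k).comp continuous_snd)
  exact h1.add h2

lemma addMap_surjective (n : ℕ) : Function.Surjective (addMap n) := by
  intro r
  refine ⟨⟨fun k => ⌊r k⌋, fun k => ⟨Int.fract (r k), Int.fract_nonneg _, (Int.fract_lt_one _).le⟩⟩,
    ?_⟩
  funext k
  exact Int.floor_add_fract (r k)

lemma addMap_isQuotientMap (n : ℕ) : Topology.IsQuotientMap (addMap n) := by
  have hproper : IsProperMap (addMap n) := by
    rw [isProperMap_iff_isCompact_preimage]
    refine ⟨addMap_continuous n, fun K hK => ?_⟩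
    obtain ⟨R, hR⟩ := hK.isBounded.subset_closedBall 0
    set M : ℤ := ⌈R⌉ + 1 with hM
    have hsub : addMap n ⁻¹' K ⊆ (Set.pi Set.univ fun _ : Fin n => Set.Icc (-M) M) ×ˢ
        (Set.univ : Set (Fin n → unitInterval)) := by
      rintro ⟨z, i⟩ hx
      refine ⟨fun k _ => ?_, trivial⟩
      have h1 : dist (addMap n (z, i)) 0 ≤ R := hR hx
      have h2 : |addMap n (z, i) k| ≤ R := by
        have hle := dist_le_pi_dist (addMap n (z, i)) (0 : Fin n → ℝ) k
        simp only [Real.dist_eq, Pi.zero_apply, sub_zero] at hle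
        linarith
      have hde : addMap n (z, i) k = (z k : ℝ) + (i k : ℝ) := rfl
      have hik0 := (i k).2.1
      have hik1 := (i k).2.2
      rw [abs_le] at h2
      have h3 : |(z k : ℝ)| ≤ R + 1 := by
        rw [abs_le]
        constructor <;> linarith [h2.1, h2.2]
      have hru : R + 1 ≤ (M : ℝ) := by
        have := Int.le_ceil R
        push_cast [hM]
        linarith
      rw [← Int.cast_abs] at h3
      have h4 : |z k| ≤ M := by exact_mod_cast h3.trans hru
      rw [abs_le] at h4
      exact h4
    have hfin : (Set.pi Set.univ fun _ : Fin n => Set.Icc (-M) M).Finite :=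
      Set.Finite.pi (fun _ => Set.finite_Icc _ _)
    have hcpt : IsCompact ((Set.pi Set.univ fun _ : Fin n => Set.Icc (-M) M) ×ˢ
        (Set.univ : Set (Fin n → unitInterval))) :=
      hfin.isCompact.prod isCompact_univ
    exact hcpt.of_isClosed_subset (hK.isClosed.preimage (addMap_continuous n)) hsub
  exact hproper.isClosedMap.isQuotientMap (addMap_continuous n) (addMap_surjective n)

theorem statement0 (n : ℕ) (hn : 1 ≤ n) :
    (∀ x y : (Fin n → ℤ) × (Fin n → unitInterval), rel0 n x y ↔ addMap n x = addMap n y) ∧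
    Equivalence (rel0 n) ∧
    Topology.IsQuotientMap (addMap n) ∧
    ∃ φ : Quot (rel0 n) ≃ₜ (Fin n → ℝ),
      ∀ x : (Fin n → ℤ) × (Fin n → unitInterval), φ (Quot.mk (rel0 n) x) = addMap n x := by
  refine ⟨rel0_iff n, ?_, addMap_isQuotientMap n, ?_⟩
  · constructor
    · intro x; rw [rel0_iff]
    · intro x y h; rw [rel0_iff] at *; exact h.symm
    · intro x y z h1 h2; rw [rel0_iff] at *; exact h1.trans h2
  · set f : Quot (rel0 n) → (Fin n → ℝ) :=
      Quot.lift (addMap n) (fun a b h => (rel0_iff n a b).mp h) with hf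
    have hcomp : f ∘ Quot.mk (rel0 n) = addMap n := rfl
    have hcontf : Continuous f :=
      continuous_quot_lift _ (addMap_continuous n)
    have hbij : Function.Bijective f := by
      constructor
      · rintro ⟨a⟩ ⟨b⟩ h
        exact Quot.sound ((rel0_iff n a b).mpr h)
      · intro r
        obtain ⟨x, hx⟩ := addMap_surjective n r
        exact ⟨Quot.mk _ x, hx⟩
    have hqm : Topology.IsQuotientMap f :=
      Topology.IsQuotientMap.of_comp continuous_quot_mk hcontf
        (hcomp ▸ addMap_isQuotientMap n)
    let e : Quot (rel0 n) ≃ (Fin n → ℝ) := Equiv.ofBijective f hbij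
    have hopen : IsOpenMap f := by
      intro U hU
      rw [← hqm.isOpen_preimage, Set.preimage_image_eq _ hbij.1]
      exact hU
    exact ⟨Equiv.toHomeomorphOfContinuousOpen e hcontf hopen, fun x => rfl⟩
end
end

section
/- The relation h on βℤⁿ × Iⁿ is an equivalence relation, and for every (p, i) ∈ βℤⁿ × Iⁿ its h-equivalence class equals the set { (h_{1_A − 1_B}(p), ψ_{A∪B}(i)) : A ⊆ A₀(i), B ⊆ B₀(i) }; in particular every h-class is finite, of cardinality 2^{|A₀(i)| + |B₀(i)|}. -/
open Set

noncomputable section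

/-- `h_N`: the Stone–Čech extension of translation by `N` on `ℤⁿ`. -/
def hshift (n : ℕ) (N : Fin n → ℤ) : StoneCech (Fin n → ℤ) → StoneCech (Fin n → ℤ) :=
  stoneCechExtend (g := fun z : Fin n → ℤ => stoneCechUnit (z + N))
    (continuous_stoneCechUnit.comp continuous_of_discreteTopology)

/-- The relation `h` on `βℤⁿ × Iⁿ`. -/
def hrel (n : ℕ) (x y : StoneCech (Fin n → ℤ) × (Fin n → unitInterval)) : Prop :=
  ∃ A B : Set (Fin n), A ⊆ Aset n x.2 ∧ B ⊆ Bset n x.2 ∧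
    y.1 = hshift n (indVec n A - indVec n B) x.1 ∧ y.2 = psiFlip n (A ∪ B) x.2

/-- `K = (βℤⁿ × Iⁿ)/h`, with the quotient topology. -/
abbrev Kspace (n : ℕ) := Quot (hrel n)

/-- The quotient map `q : βℤⁿ × Iⁿ → K`. -/
abbrev qmap (n : ℕ) : StoneCech (Fin n → ℤ) × (Fin n → unitInterval) → Kspace n :=
  Quot.mk (hrel n)

section Helpers

variable {n : ℕ}

lemma hshift_unit (N z : Fin n → ℤ) : hshift n N (stoneCechUnit z) = stoneCechUnit (z + N) :=
  congrFun (stoneCechExtend_extends _) z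

lemma continuous_hshift (N : Fin n → ℤ) : Continuous (hshift n N) :=
  continuous_stoneCechExtend _

lemma hshift_add (N M : Fin n → ℤ) (p : StoneCech (Fin n → ℤ)) :
    hshift n M (hshift n N p) = hshift n (N + M) p := by
  have h : (hshift n M ∘ hshift n N) = hshift n (N + M) := by
    refine denseRange_stoneCechUnit.equalizer ((continuous_hshift M).comp (continuous_hshift N))
      (continuous_hshift _) ?_
    funext z
    simp [Function.comp, hshift_unit, add_assoc]
  exact congrFun h p

lemma hshift_zero (p : StoneCech (Fin n → ℤ)) : hshift n 0 p = p := by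
  have h : hshift n 0 = id := by
    refine denseRange_stoneCechUnit.equalizer (continuous_hshift 0) continuous_id ?_
    funext z
    simp [Function.comp, hshift_unit]
  exact congrFun h p

lemma psiFlip_empty (i : Fin n → unitInterval) : psiFlip n ∅ i = i := by
  funext k; simp [psiFlip]

lemma psiFlip_psiFlip (S T : Set (Fin n)) (i : Fin n → unitInterval) :
    psiFlip n T (psiFlip n S i) = psiFlip n (symmDiff S T) i := by
  funext k
  by_cases hS : k ∈ S <;> by_cases hT : k ∈ T <;>
    simp [psiFlip, hS, hT, Set.mem_symmDiff]

lemma ncard_subsets (s : Set (Fin n)) :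
    {A : Set (Fin n) | A ⊆ s}.ncard = 2 ^ s.ncard := by
  have e : {A : Set (Fin n) // A ⊆ s} ≃ (↥s → Prop) :=
    { toFun := fun A x => (x : Fin n) ∈ A.1
      invFun := fun f => ⟨{k | ∃ h : k ∈ s, f ⟨k, h⟩}, fun k hk => hk.1⟩
      left_inv := fun A => by
        ext k
        exact ⟨fun ⟨h, hk⟩ => hk, fun hk => ⟨A.2 hk, hk⟩⟩
      right_inv := fun f => by
        funext x
        exact propext ⟨fun ⟨h, hf⟩ => hf, fun hf => ⟨x.2, hf⟩⟩ }
  calc {A : Set (Fin n) | A ⊆ s}.ncard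
      = Nat.card {A : Set (Fin n) // A ⊆ s} := (Nat.card_coe_set_eq _).symm
    _ = Nat.card (↥s → Prop) := Nat.card_congr e
    _ = Nat.card Prop ^ Nat.card ↥s := Nat.card_fun
    _ = 2 ^ s.ncard := by
        rw [Nat.card_coe_set_eq, Nat.card_eq_fintype_card, Fintype.card_prop]

lemma psiFlip_coe_mem (S : Set (Fin n)) (i : Fin n → unitInterval) {k : Fin n} (hk : k ∈ S) :
    (psiFlip n S i k : ℝ) = 1 - (i k : ℝ) := by
  simp only [psiFlip, if_pos hk, unitInterval.coe_symm_eq]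

lemma psiFlip_coe_notMem (S : Set (Fin n)) (i : Fin n → unitInterval) {k : Fin n} (hk : k ∉ S) :
    psiFlip n S i k = i k := by
  simp only [psiFlip, if_neg hk]

lemma hrel_equiv : Equivalence (hrel n) := by
  constructor
  · intro x
    refine ⟨∅, ∅, empty_subset _, empty_subset _, ?_, ?_⟩
    · rw [sub_self, hshift_zero]
    · rw [Set.empty_union, psiFlip_empty]
  · rintro x y ⟨A, B, hA, hB, hp, hi⟩
    refine ⟨B, A, ?_, ?_, ?_, ?_⟩
    · intro k hk
      show (y.2 k : ℝ) = 1
      rw [hi, psiFlip_coe_mem _ _ (Or.inr hk), hB hk]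
      norm_num
    · intro k hk
      show (y.2 k : ℝ) = 0
      rw [hi, psiFlip_coe_mem _ _ (Or.inl hk), hA hk]
      norm_num
    · rw [hp, hshift_add]
      have h0 : (indVec n A - indVec n B) + (indVec n B - indVec n A) = 0 := by abel
      rw [h0, hshift_zero]
    · rw [hi, psiFlip_psiFlip, Set.union_comm B A, symmDiff_self]
      exact (psiFlip_empty x.2).symm
  · rintro x y z ⟨A, B, hA, hB, hp, hi⟩ ⟨A', B', hA', hB', hp', hi'⟩
    have hy1 : ∀ k ∈ A, (y.2 k : ℝ) = 0 := by
      intro k hk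
      rw [hi, psiFlip_coe_mem _ _ (Or.inl hk), hA hk]; norm_num
    have hy2 : ∀ k ∈ B, (y.2 k : ℝ) = 1 := by
      intro k hk
      rw [hi, psiFlip_coe_mem _ _ (Or.inr hk), hB hk]; norm_num
    have hy3 : ∀ k, k ∉ A → k ∉ B → y.2 k = x.2 k := by
      intro k h1 h2
      rw [hi, psiFlip_coe_notMem]
      simp [h1, h2]
    have hAB : ∀ k, k ∈ A → k ∉ B :=
      fun k h1 h2 => one_ne_zero ((hA h1).symm.trans (hB h2))
    have hA'B' : ∀ k, k ∈ A' → k ∉ B' :=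
      fun k h1 h2 => one_ne_zero ((hA' h1).symm.trans (hB' h2))
    have hAA' : ∀ k, k ∈ A → k ∉ A' :=
      fun k h1 h2 => one_ne_zero ((hA' h2).symm.trans (hy1 k h1))
    have hBB' : ∀ k, k ∈ B → k ∉ B' :=
      fun k h1 h2 => one_ne_zero ((hy2 k h1).symm.trans (hB' h2))
    refine ⟨(A \ B') ∪ (A' \ B), (B \ A') ∪ (B' \ A), ?_, ?_, ?_, ?_⟩
    · rintro k (⟨hk, -⟩ | ⟨hk, hkB⟩)
      · exact hA hk
      · have hkA : k ∉ A := fun h => hAA' k h hk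
        show (x.2 k : ℝ) = 1
        rw [← hy3 k hkA hkB]
        exact hA' hk
    · rintro k (⟨hk, -⟩ | ⟨hk, hkA⟩)
      · exact hB hk
      · have hkB : k ∉ B := fun h => hBB' k h hk
        show (x.2 k : ℝ) = 0
        rw [← hy3 k hkA hkB]
        exact hB' hk
    · have hind : (indVec n A - indVec n B) + (indVec n A' - indVec n B') =
          indVec n ((A \ B') ∪ (A' \ B)) - indVec n ((B \ A') ∪ (B' \ A)) := by
        funext k
        have h1 := hAB k
        have h2 := hA'B' k
        have h3 := hAA' k
        have h4 := hBB' k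
        by_cases kA : k ∈ A <;> by_cases kB : k ∈ B <;> by_cases kA' : k ∈ A' <;>
          by_cases kB' : k ∈ B' <;>
          simp_all [indVec, Set.mem_union, Set.mem_diff]
      rw [hp', hp, hshift_add, hind]
    · have hset : symmDiff (A ∪ B) (A' ∪ B') =
          ((A \ B') ∪ (A' \ B)) ∪ ((B \ A') ∪ (B' \ A)) := by
        ext k
        simp only [Set.mem_symmDiff, Set.mem_union, Set.mem_diff]
        have h1 := hAB k
        have h2 := hA'B' k
        have h3 := hAA' k
        have h4 := hBB' k
        by_cases kA : k ∈ A <;> by_cases kB : k ∈ B <;> by_cases kA' : k ∈ A' <;>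
          by_cases kB' : k ∈ B' <;> simp_all
      rw [hi', hi, psiFlip_psiFlip, hset]

end Helpers

theorem statement2 (n : ℕ) (hn : 1 ≤ n) :
    Equivalence (hrel n) ∧
    ∀ (p : StoneCech (Fin n → ℤ)) (i : Fin n → unitInterval),
      ({y | hrel n (p, i) y} =
        {y | ∃ A B : Set (Fin n), A ⊆ Aset n i ∧ B ⊆ Bset n i ∧
          y = (hshift n (indVec n A - indVec n B) p, psiFlip n (A ∪ B) i)}) ∧
      {y | hrel n (p, i) y}.Finite ∧
      {y | hrel n (p, i) y}.ncard = 2 ^ ((Aset n i).ncard + (Bset n i).ncard) := by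
  refine ⟨hrel_equiv, ?_⟩
  intro p i
  have hset : {y | hrel n (p, i) y} =
      {y | ∃ A B : Set (Fin n), A ⊆ Aset n i ∧ B ⊆ Bset n i ∧
        y = (hshift n (indVec n A - indVec n B) p, psiFlip n (A ∪ B) i)} := by
    ext y
    simp only [Set.mem_setOf_eq, hrel, Prod.ext_iff]
  have him : {y | ∃ A B : Set (Fin n), A ⊆ Aset n i ∧ B ⊆ Bset n i ∧
        y = (hshift n (indVec n A - indVec n B) p, psiFlip n (A ∪ B) i)} =
      (fun AB : Set (Fin n) × Set (Fin n) =>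
        (hshift n (indVec n AB.1 - indVec n AB.2) p, psiFlip n (AB.1 ∪ AB.2) i)) ''
        {AB : Set (Fin n) × Set (Fin n) | AB.1 ⊆ Aset n i ∧ AB.2 ⊆ Bset n i} := by
    ext y
    simp only [Set.mem_image, Set.mem_setOf_eq, Prod.exists]
    constructor
    · rintro ⟨A, B, h1, h2, rfl⟩; exact ⟨A, B, ⟨h1, h2⟩, rfl⟩
    · rintro ⟨A, B, ⟨h1, h2⟩, rfl⟩; exact ⟨A, B, h1, h2, rfl⟩
  have hkey : ∀ A B A₂ B₂ : Set (Fin n), A ⊆ Aset n i → B ⊆ Bset n i →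
      A₂ ⊆ Aset n i → B₂ ⊆ Bset n i →
      psiFlip n (A ∪ B) i = psiFlip n (A₂ ∪ B₂) i → A ⊆ A₂ ∧ B ⊆ B₂ := by
    intro A B A₂ B₂ hA hB hA₂ hB₂ heq
    constructor
    · intro k hk
      have hv : (psiFlip n (A ∪ B) i k : ℝ) = 0 := by
        rw [psiFlip_coe_mem _ _ (Or.inl hk), hA hk]; norm_num
      rw [heq] at hv
      by_cases hk2 : k ∈ A₂ ∪ B₂
      · rcases hk2 with h | h
        · exact h
        · exact absurd ((hA hk).symm.trans (hB₂ h)) one_ne_zero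
      · rw [psiFlip_coe_notMem _ _ hk2] at hv
        exact absurd ((hA hk).symm.trans hv) one_ne_zero
    · intro k hk
      have hv : (psiFlip n (A ∪ B) i k : ℝ) = 1 := by
        rw [psiFlip_coe_mem _ _ (Or.inr hk), hB hk]; norm_num
      rw [heq] at hv
      by_cases hk2 : k ∈ A₂ ∪ B₂
      · rcases hk2 with h | h
        · exact absurd ((hB hk).symm.trans (hA₂ h)).symm one_ne_zero
        · exact h
      · rw [psiFlip_coe_notMem _ _ hk2] at hv
        exact absurd ((hB hk).symm.trans hv).symm one_ne_zero
  have hinj : Set.InjOn (fun AB : Set (Fin n) × Set (Fin n) =>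
      (hshift n (indVec n AB.1 - indVec n AB.2) p, psiFlip n (AB.1 ∪ AB.2) i))
      {AB : Set (Fin n) × Set (Fin n) | AB.1 ⊆ Aset n i ∧ AB.2 ⊆ Bset n i} := by
    rintro ⟨A, B⟩ ⟨h1, h2⟩ ⟨A₂, B₂⟩ ⟨h1₂, h2₂⟩ heq
    have h2nd : psiFlip n (A ∪ B) i = psiFlip n (A₂ ∪ B₂) i := congrArg Prod.snd heq
    have e1 := hkey A B A₂ B₂ h1 h2 h1₂ h2₂ h2nd
    have e2 := hkey A₂ B₂ A B h1₂ h2₂ h1 h2 h2nd.symm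
    simp only [Prod.mk.injEq]
    exact ⟨subset_antisymm e1.1 e2.1, subset_antisymm e1.2 e2.2⟩
  refine ⟨hset, ?_, ?_⟩
  · rw [hset, him]
    exact (Set.toFinite _).image _
  · rw [hset, him, Set.ncard_image_of_injOn hinj]
    have hprod : {AB : Set (Fin n) × Set (Fin n) | AB.1 ⊆ Aset n i ∧ AB.2 ⊆ Bset n i} =
        {A : Set (Fin n) | A ⊆ Aset n i} ×ˢ {B : Set (Fin n) | B ⊆ Bset n i} := rfl
    have hcard : ({A : Set (Fin n) | A ⊆ Aset n i} ×ˢ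
          {B : Set (Fin n) | B ⊆ Bset n i}).ncard =
        {A : Set (Fin n) | A ⊆ Aset n i}.ncard * {B : Set (Fin n) | B ⊆ Bset n i}.ncard := by
      rw [← Nat.card_coe_set_eq, ← Nat.card_coe_set_eq, ← Nat.card_coe_set_eq,
        Nat.card_congr (Equiv.Set.prod _ _), Nat.card_prod]
    rw [hprod, hcard, ncard_subsets, ncard_subsets, pow_add]
end
end

section
/- For every j ∈ [0,1)ⁿ the formula Λ₂(j)(q(p, i)) = q(h_N(p), i + j − N), where N ∈ {0,1}ⁿ is defined by N_k = 1 if i_k + j_k ≥ 1 and N_k = 0 otherwise, gives a well-defined homeomorphism Λ₂(j) : K → K (independent of the chosen h-class representative (p, i), with i + j − N ∈ Iⁿ). -/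
open Set

noncomputable section

open Classical in
/-- `N ∈ {0,1}ⁿ` with `N_k = 1` iff `i_k + j_k ≥ 1`. -/
def Nvec (n : ℕ) (i : Fin n → unitInterval) (j : Fin n → ℝ) : Fin n → ℤ :=
  fun k => if 1 ≤ (i k : ℝ) + j k then 1 else 0

/-! ### Auxiliary material for `statement6` -/

namespace Statement6Aux

open Classical

variable {n : ℕ} {j : Fin n → ℝ}

/-- The ambient space `βℤⁿ × Iⁿ`. -/
abbrev XX (n : ℕ) := StoneCech (Fin n → ℤ) × (Fin n → unitInterval)

lemma hshift_unit (n : ℕ) (N z : Fin n → ℤ) :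
    hshift n N (stoneCechUnit z) = stoneCechUnit (z + N) :=
  congrFun (stoneCechExtend_extends
    (continuous_stoneCechUnit.comp continuous_of_discreteTopology)) z

lemma continuous_hshift (n : ℕ) (N : Fin n → ℤ) : Continuous (hshift n N) :=
  continuous_stoneCechExtend _

lemma hshift_hshift (n : ℕ) (N M : Fin n → ℤ) (p : StoneCech (Fin n → ℤ)) :
    hshift n N (hshift n M p) = hshift n (M + N) p := by
  have h : (fun q => hshift n N (hshift n M q)) = hshift n (M + N) := by
    apply stoneCech_hom_ext ((continuous_hshift n N).comp (continuous_hshift n M))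
      (continuous_hshift n (M + N))
    funext z
    simp only [Function.comp_apply, hshift_unit, add_assoc]
  exact congrFun h p

lemma hshift_comp_eq {V : Fin n → ℤ} (N M : Fin n → ℤ) (p : StoneCech (Fin n → ℤ))
    (h : ∀ k, M k + N k = V k) :
    hshift n N (hshift n M p) = hshift n V p := by
  rw [hshift_hshift]
  exact congrFun (congrArg (hshift n) (funext h)) p

/-- `M_k = 1` iff `i_k < j_k`. Used for the inverse map. -/
def Mvec (n : ℕ) (i : Fin n → unitInterval) (j : Fin n → ℝ) : Fin n → ℤ :=
  fun k => if (i k : ℝ) < j k then 1 else 0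

/-- Clamp to the unit interval. -/
def pIcc (x : ℝ) : unitInterval := Set.projIcc 0 1 zero_le_one x

lemma pIcc_coe {x : ℝ} (hx : x ∈ Set.Icc (0:ℝ) 1) : ((pIcc x : unitInterval) : ℝ) = x := by
  rw [pIcc, Set.projIcc_of_mem _ hx]

lemma continuous_pIcc : Continuous pIcc := continuous_projIcc (h := zero_le_one)

/-- Forward map with a fixed shift vector. -/
def FP (n : ℕ) (j : Fin n → ℝ) (N : Fin n → ℤ) (x : XX n) : XX n :=
  (hshift n N x.1, fun k => pIcc ((x.2 k : ℝ) + j k - N k))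

/-- Backward map with a fixed shift vector. -/
def GP (n : ℕ) (j : Fin n → ℝ) (N : Fin n → ℤ) (x : XX n) : XX n :=
  (hshift n (-N) x.1, fun k => pIcc ((x.2 k : ℝ) - j k + N k))

/-- The forward map. -/
def fpair (n : ℕ) (j : Fin n → ℝ) (x : XX n) : XX n := FP n j (Nvec n x.2 j) x

/-- The backward map. -/
def gpair (n : ℕ) (j : Fin n → ℝ) (x : XX n) : XX n := GP n j (Mvec n x.2 j) x

lemma memF (hj : ∀ k, j k ∈ Set.Ico (0:ℝ) 1) (i : Fin n → unitInterval) (k : Fin n) :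
    (i k : ℝ) + j k - (Nvec n i j k : ℝ) ∈ Set.Icc (0:ℝ) 1 := by
  have h0 := unitInterval.nonneg (i k); have h1 := unitInterval.le_one (i k)
  have hj0 := (hj k).1; have hj1 := (hj k).2
  simp only [Nvec]
  split_ifs with h
  · rw [Set.mem_Icc]; push_cast; constructor <;> linarith
  · rw [Set.mem_Icc]; push_cast; rw [not_le] at h; constructor <;> linarith

lemma memG (hj : ∀ k, j k ∈ Set.Ico (0:ℝ) 1) (i : Fin n → unitInterval) (k : Fin n) :
    (i k : ℝ) - j k + (Mvec n i j k : ℝ) ∈ Set.Icc (0:ℝ) 1 := by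
  have h0 := unitInterval.nonneg (i k); have h1 := unitInterval.le_one (i k)
  have hj0 := (hj k).1; have hj1 := (hj k).2
  simp only [Mvec]
  split_ifs with h
  · rw [Set.mem_Icc]; push_cast; constructor <;> linarith
  · rw [Set.mem_Icc]; push_cast; rw [not_lt] at h; constructor <;> linarith

lemma fpair2_coe (hj : ∀ k, j k ∈ Set.Ico (0:ℝ) 1) (x : XX n) (k : Fin n) :
    ((fpair n j x).2 k : ℝ) = (x.2 k : ℝ) + j k - (Nvec n x.2 j k : ℝ) :=
  pIcc_coe (memF hj x.2 k)

lemma gpair2_coe (hj : ∀ k, j k ∈ Set.Ico (0:ℝ) 1) (x : XX n) (k : Fin n) :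
    ((gpair n j x).2 k : ℝ) = (x.2 k : ℝ) - j k + (Mvec n x.2 j k : ℝ) :=
  pIcc_coe (memG hj x.2 k)

/-! #### Well-definedness -/

lemma fpair_eq (hj : ∀ k, j k ∈ Set.Ico (0:ℝ) 1) {x y : XX n} (h : hrel n x y) :
    fpair n j x = fpair n j y := by
  obtain ⟨A, B, hA, hB, h1, h2⟩ := h
  -- coordinate values of x.2 on A and B
  have hxA : ∀ k ∈ A, (x.2 k : ℝ) = 1 := fun k hk => hA hk
  have hxB : ∀ k ∈ B, (x.2 k : ℝ) = 0 := fun k hk => hB hk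
  have hy2 : ∀ k, (y.2 k : ℝ) =
      if k ∈ A then 0 else if k ∈ B then 1 else (x.2 k : ℝ) := by
    intro k
    rw [h2]
    by_cases hka : k ∈ A
    · simp [psiFlip, Set.mem_union, hka, unitInterval.coe_symm_eq, hxA k hka]
    · by_cases hkb : k ∈ B
      · simp [psiFlip, Set.mem_union, hka, hkb, unitInterval.coe_symm_eq, hxB k hkb]
      · simp [psiFlip, Set.mem_union, hka, hkb]
  -- the new shift vectors
  have hNy : ∀ k, Nvec n y.2 j k = if k ∈ A then 0 else if k ∈ B then 1 else Nvec n x.2 j k := by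
    intro k
    by_cases hka : k ∈ A
    · have : ¬ (1 ≤ (y.2 k : ℝ) + j k) := by rw [hy2 k]; simp [hka]; linarith [(hj k).2]
      simp [Nvec, this, hka]
    · by_cases hkb : k ∈ B
      · have : (1 : ℝ) ≤ (y.2 k : ℝ) + j k := by rw [hy2 k]; simp [hka, hkb]; linarith [(hj k).1]
        simp [Nvec, this, hka, hkb]
      · have : (y.2 k : ℝ) = (x.2 k : ℝ) := by rw [hy2 k]; simp [hka, hkb]
        simp [Nvec, this, hka, hkb]
  have hNxA : ∀ k ∈ A, Nvec n x.2 j k = 1 := by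
    intro k hk
    have : (1:ℝ) ≤ (x.2 k : ℝ) + j k := by rw [hxA k hk]; linarith [(hj k).1]
    simp [Nvec, this]
  have hNxB : ∀ k ∈ B, Nvec n x.2 j k = 0 := by
    intro k hk
    have : ¬ (1:ℝ) ≤ (x.2 k : ℝ) + j k := by rw [hxB k hk]; simp; linarith [(hj k).2]
    simp [Nvec, this]
  refine Prod.ext ?_ ?_
  · -- first components
    show hshift n (Nvec n x.2 j) x.1 = hshift n (Nvec n y.2 j) y.1
    rw [h1]
    refine (hshift_comp_eq (Nvec n y.2 j) (indVec n A - indVec n B) x.1 ?_).symm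
    intro k
    have hab : ¬ (k ∈ A ∧ k ∈ B) := by
      rintro ⟨ha, hb⟩
      have := hxA k ha; have := hxB k hb; linarith
    by_cases hka : k ∈ A
    · have hkb : k ∉ B := fun hkb => hab ⟨hka, hkb⟩
      simp [Pi.sub_apply, indVec, hka, hkb, hNy k, hNxA k hka]
    · by_cases hkb : k ∈ B
      · simp [Pi.sub_apply, indVec, hka, hkb, hNy k, hNxB k hkb]
      · simp [Pi.sub_apply, indVec, hka, hkb, hNy k]
  · -- second components
    show (fun k => pIcc ((x.2 k : ℝ) + j k - (Nvec n x.2 j k : ℝ)))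
        = fun k => pIcc ((y.2 k : ℝ) + j k - (Nvec n y.2 j k : ℝ))
    funext k
    congr 1
    rw [hy2 k, hNy k]
    by_cases hka : k ∈ A
    · simp [hka, hNxA k hka, hxA k hka]
    · by_cases hkb : k ∈ B
      · simp [hka, hkb, hNxB k hkb, hxB k hkb]
      · simp [hka, hkb]

lemma gpair_rel (hj : ∀ k, j k ∈ Set.Ico (0:ℝ) 1) {x y : XX n} (h : hrel n x y) :
    hrel n (gpair n j x) (gpair n j y) := by
  obtain ⟨A, B, hA, hB, h1, h2⟩ := h
  have hxA : ∀ k ∈ A, (x.2 k : ℝ) = 1 := fun k hk => hA hk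
  have hxB : ∀ k ∈ B, (x.2 k : ℝ) = 0 := fun k hk => hB hk
  have hab : ∀ k, ¬ (k ∈ A ∧ k ∈ B) := by
    rintro k ⟨ha, hb⟩
    have := hxA k ha; have := hxB k hb; linarith
  have hy2 : ∀ k, (y.2 k : ℝ) =
      if k ∈ A then 0 else if k ∈ B then 1 else (x.2 k : ℝ) := by
    intro k
    rw [h2]
    by_cases hka : k ∈ A
    · simp [psiFlip, Set.mem_union, hka, unitInterval.coe_symm_eq, hxA k hka]
    · by_cases hkb : k ∈ B
      · simp [psiFlip, Set.mem_union, hka, hkb, unitInterval.coe_symm_eq, hxB k hkb]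
      · simp [psiFlip, Set.mem_union, hka, hkb]
  -- value of the Mvec-vectors
  have hMxA : ∀ k ∈ A, Mvec n x.2 j k = 0 := by
    intro k hk
    have : ¬ ((x.2 k : ℝ) < j k) := by rw [hxA k hk]; push_neg; linarith [(hj k).2]
    simp [Mvec, this]
  have hMyB : ∀ k ∈ B, Mvec n y.2 j k = 0 := by
    intro k hk
    have hkb : k ∉ A := fun hka => hab k ⟨hka, hk⟩
    have : ¬ ((y.2 k : ℝ) < j k) := by rw [hy2 k]; simp [hkb, hk]; linarith [(hj k).2]
    simp [Mvec, this]
  refine ⟨{k | k ∈ A ∧ j k = 0}, {k | k ∈ B ∧ j k = 0}, ?_, ?_, ?_, ?_⟩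
  · rintro k ⟨hka, hjk⟩
    show ((gpair n j x).2 k : ℝ) = 1
    rw [gpair2_coe hj, hxA k hka, hjk, hMxA k hka]
    norm_num
  · rintro k ⟨hkb, hjk⟩
    show ((gpair n j x).2 k : ℝ) = 0
    have hka : k ∉ A := fun hka => hab k ⟨hka, hkb⟩
    have : Mvec n x.2 j k = 0 := by
      have : ¬ ((x.2 k : ℝ) < j k) := by rw [hxB k hkb, hjk]; simp
      simp [Mvec, this]
    rw [gpair2_coe hj, hxB k hkb, hjk, this]
    norm_num
  · -- first components
    show hshift n (-(Mvec n y.2 j)) y.1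
        = hshift n (indVec n {k | k ∈ A ∧ j k = 0} - indVec n {k | k ∈ B ∧ j k = 0})
            (hshift n (-(Mvec n x.2 j)) x.1)
    rw [h1, hshift_hshift, hshift_hshift]
    refine congrFun (congrArg (hshift n) (funext fun k => ?_)) x.1
    simp only [Pi.add_apply, Pi.neg_apply, Pi.sub_apply, indVec]
    by_cases hka : k ∈ A
    · have hkb : k ∉ B := fun hkb => hab k ⟨hka, hkb⟩
      have hmx := hMxA k hka
      by_cases hjk : j k = 0
      · have hmy : Mvec n y.2 j k = 0 := by
          have : ¬ ((y.2 k : ℝ) < j k) := by rw [hy2 k, hjk]; simp [hka]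
          simp [Mvec, this]
        simp [hka, hkb, hjk, hmx, hmy, Set.mem_setOf_eq]
      · have hmy : Mvec n y.2 j k = 1 := by
          have : (y.2 k : ℝ) < j k := by
            rw [hy2 k]; simp [hka]
            exact lt_of_le_of_ne (hj k).1 (Ne.symm hjk)
          simp [Mvec, this]
        simp [hka, hkb, hjk, hmx, hmy, Set.mem_setOf_eq]
    · by_cases hkb : k ∈ B
      · have hmy := hMyB k hkb
        by_cases hjk : j k = 0
        · have hmx : Mvec n x.2 j k = 0 := by
            have : ¬ ((x.2 k : ℝ) < j k) := by rw [hxB k hkb, hjk]; simp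
            simp [Mvec, this]
          simp [hka, hkb, hjk, hmx, hmy, Set.mem_setOf_eq]
        · have hmx : Mvec n x.2 j k = 1 := by
            have : (x.2 k : ℝ) < j k := by
              rw [hxB k hkb]
              exact lt_of_le_of_ne (hj k).1 (Ne.symm hjk)
            simp [Mvec, this]
          simp [hka, hkb, hjk, hmx, hmy, Set.mem_setOf_eq]
      · have hmy : Mvec n y.2 j k = Mvec n x.2 j k := by
          have : (y.2 k : ℝ) = (x.2 k : ℝ) := by rw [hy2 k]; simp [hka, hkb]
          simp [Mvec, this]
        simp [hka, hkb, hmy, Set.mem_setOf_eq]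
  · -- second components
    funext k
    apply Subtype.ext
    rw [gpair2_coe hj]
    show _ = ((psiFlip n _ ((gpair n j x).2) k : unitInterval) : ℝ)
    rw [hy2 k]
    by_cases hka : k ∈ A
    · have hkb : k ∉ B := fun hkb => hab k ⟨hka, hkb⟩
      have hmx := hMxA k hka
      by_cases hjk : j k = 0
      · have hmy : Mvec n y.2 j k = 0 := by
          have : ¬ ((y.2 k : ℝ) < j k) := by rw [hy2 k, hjk]; simp [hka]
          simp [Mvec, this]
        have hmem : k ∈ ({k | k ∈ A ∧ j k = 0} ∪ {k | k ∈ B ∧ j k = 0} : Set (Fin n)) :=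
          Or.inl ⟨hka, hjk⟩
        rw [show psiFlip n _ ((gpair n j x).2) k = unitInterval.symm ((gpair n j x).2 k) from
          if_pos hmem]
        rw [unitInterval.coe_symm_eq, gpair2_coe hj, hxA k hka, hjk, hmx, hmy]
        simp [hka]
      · have hmy : Mvec n y.2 j k = 1 := by
          have : (y.2 k : ℝ) < j k := by
            rw [hy2 k]; simp [hka]
            exact lt_of_le_of_ne (hj k).1 (Ne.symm hjk)
          simp [Mvec, this]
        have hmem : k ∉ ({k | k ∈ A ∧ j k = 0} ∪ {k | k ∈ B ∧ j k = 0} : Set (Fin n)) := by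
          rintro (⟨_, h⟩ | ⟨h', _⟩)
          exacts [hjk h, hkb h']
        rw [show psiFlip n _ ((gpair n j x).2) k = (gpair n j x).2 k from if_neg hmem]
        rw [gpair2_coe hj, hxA k hka, hmx, hmy]
        simp [hka]
        ring
    · by_cases hkb : k ∈ B
      · have hmy := hMyB k hkb
        by_cases hjk : j k = 0
        · have hmx : Mvec n x.2 j k = 0 := by
            have : ¬ ((x.2 k : ℝ) < j k) := by rw [hxB k hkb, hjk]; simp
            simp [Mvec, this]
          have hmem : k ∈ ({k | k ∈ A ∧ j k = 0} ∪ {k | k ∈ B ∧ j k = 0} : Set (Fin n)) :=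
            Or.inr ⟨hkb, hjk⟩
          rw [show psiFlip n _ ((gpair n j x).2) k = unitInterval.symm ((gpair n j x).2 k) from
            if_pos hmem]
          rw [unitInterval.coe_symm_eq, gpair2_coe hj, hxB k hkb, hjk, hmx, hmy]
          simp [hka, hkb]
        · have hmx : Mvec n x.2 j k = 1 := by
            have : (x.2 k : ℝ) < j k := by
              rw [hxB k hkb]
              exact lt_of_le_of_ne (hj k).1 (Ne.symm hjk)
            simp [Mvec, this]
          have hmem : k ∉ ({k | k ∈ A ∧ j k = 0} ∪ {k | k ∈ B ∧ j k = 0} : Set (Fin n)) := by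
            rintro (⟨h', _⟩ | ⟨_, h⟩)
            exacts [hka h', hjk h]
          rw [show psiFlip n _ ((gpair n j x).2) k = (gpair n j x).2 k from if_neg hmem]
          rw [gpair2_coe hj, hxB k hkb, hmx, hmy]
          simp [hka, hkb]
          ring
      · have hmy : Mvec n y.2 j k = Mvec n x.2 j k := by
          have : (y.2 k : ℝ) = (x.2 k : ℝ) := by rw [hy2 k]; simp [hka, hkb]
          simp [Mvec, this]
        have hmem : k ∉ ({k | k ∈ A ∧ j k = 0} ∪ {k | k ∈ B ∧ j k = 0} : Set (Fin n)) := by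
          rintro (⟨h', _⟩ | ⟨h', _⟩)
          exacts [hka h', hkb h']
        rw [show psiFlip n _ ((gpair n j x).2) k = (gpair n j x).2 k from if_neg hmem]
        rw [gpair2_coe hj, hmy]
        simp [hka, hkb]

/-! #### Continuity -/

/-- Integer vector attached to a boolean vector. -/
def bN (n : ℕ) (s : Fin n → Bool) : Fin n → ℤ := fun k => if s k = true then 1 else 0

lemma continuous_coord (n : ℕ) (k : Fin n) : Continuous (fun x : XX n => (x.2 k : ℝ)) :=
  continuous_subtype_val.comp ((continuous_apply k).comp continuous_snd)

lemma continuous_qFP (n : ℕ) (j : Fin n → ℝ) (N : Fin n → ℤ) :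
    Continuous (fun x : XX n => qmap n (FP n j N x)) := by
  apply Continuous.comp
  · exact continuous_quot_mk
  · refine Continuous.prodMk ((continuous_hshift n N).comp continuous_fst) ?_
    exact continuous_pi fun k => continuous_pIcc.comp
      (((continuous_coord n k).add continuous_const).sub continuous_const)

lemma continuous_qGP (n : ℕ) (j : Fin n → ℝ) (N : Fin n → ℤ) :
    Continuous (fun x : XX n => qmap n (GP n j N x)) := by
  apply Continuous.comp
  · exact continuous_quot_mk
  · refine Continuous.prodMk ((continuous_hshift n (-N)).comp continuous_fst) ?_
    exact continuous_pi fun k => continuous_pIcc.comp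
      (((continuous_coord n k).sub continuous_const).add continuous_const)

/-- The closed pieces on which the forward map has a constant shift vector. -/
def CF (n : ℕ) (j : Fin n → ℝ) (s : Fin n → Bool) : Set (XX n) :=
  ⋂ k, {x : XX n | if s k = true then 1 ≤ (x.2 k : ℝ) + j k else (x.2 k : ℝ) + j k ≤ 1}

/-- The closed pieces on which the backward map has a constant shift vector. -/
def CG (n : ℕ) (j : Fin n → ℝ) (s : Fin n → Bool) : Set (XX n) :=
  ⋂ k, {x : XX n | if s k = true then (x.2 k : ℝ) ≤ j k else j k ≤ (x.2 k : ℝ)}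

lemma closed_CF (n : ℕ) (j : Fin n → ℝ) (s : Fin n → Bool) : IsClosed (CF n j s) := by
  refine isClosed_iInter fun k => ?_
  by_cases h : s k = true
  · simp only [CF, h, if_true]
    exact isClosed_le continuous_const ((continuous_coord n k).add continuous_const)
  · simp only [CF, h, if_false]
    exact isClosed_le ((continuous_coord n k).add continuous_const) continuous_const

lemma closed_CG (n : ℕ) (j : Fin n → ℝ) (s : Fin n → Bool) : IsClosed (CG n j s) := by
  refine isClosed_iInter fun k => ?_
  by_cases h : s k = true
  · simp only [CG, h, if_true]
    exact isClosed_le (continuous_coord n k) continuous_const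
  · simp only [CG, h, if_false]
    exact isClosed_le continuous_const (continuous_coord n k)

lemma cover_CF (n : ℕ) (j : Fin n → ℝ) : ⋃ s : Fin n → Bool, CF n j s = Set.univ := by
  rw [Set.eq_univ_iff_forall]
  intro x
  simp only [Set.mem_iUnion]
  refine ⟨fun k => decide (1 ≤ (x.2 k : ℝ) + j k), Set.mem_iInter.2 fun k => ?_⟩
  simp only [Set.mem_setOf_eq, decide_eq_true_eq]
  by_cases h : 1 ≤ (x.2 k : ℝ) + j k
  · rw [if_pos h]; exact h
  · rw [if_neg h]; exact (not_le.mp h).le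

lemma cover_CG (n : ℕ) (j : Fin n → ℝ) : ⋃ s : Fin n → Bool, CG n j s = Set.univ := by
  rw [Set.eq_univ_iff_forall]
  intro x
  simp only [Set.mem_iUnion]
  refine ⟨fun k => decide ((x.2 k : ℝ) ≤ j k), Set.mem_iInter.2 fun k => ?_⟩
  simp only [Set.mem_setOf_eq, decide_eq_true_eq]
  by_cases h : (x.2 k : ℝ) ≤ j k
  · rw [if_pos h]; exact h
  · rw [if_neg h]; exact (not_le.mp h).le

lemma eqOnF (hj : ∀ k, j k ∈ Set.Ico (0:ℝ) 1) (s : Fin n → Bool) {x : XX n}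
    (hx : x ∈ CF n j s) :
    qmap n (fpair n j x) = qmap n (FP n j (bN n s) x) := by
  have hx' : ∀ k, if s k = true then 1 ≤ (x.2 k : ℝ) + j k else (x.2 k : ℝ) + j k ≤ 1 :=
    fun k => Set.mem_iInter.1 hx k
  have h0 : ∀ k, (0:ℝ) ≤ x.2 k := fun k => unitInterval.nonneg _
  have h1 : ∀ k, (x.2 k:ℝ) ≤ 1 := fun k => unitInterval.le_one _
  symm
  apply Quot.sound
  refine ⟨{k | s k = false ∧ 1 ≤ (x.2 k : ℝ) + j k}, ∅, ?_, ?_, ?_, ?_⟩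
  · rintro k ⟨hsk, hge⟩
    show ((FP n j (bN n s) x).2 k : ℝ) = 1
    have hle : (x.2 k : ℝ) + j k ≤ 1 := by have := hx' k; rw [hsk] at this; simpa using this
    have harg : (x.2 k : ℝ) + j k - ((bN n s k : ℤ) : ℝ) = 1 := by
      simp [bN, hsk]; linarith
    show ((pIcc ((x.2 k : ℝ) + j k - ((bN n s k : ℤ) : ℝ))) : ℝ) = 1
    rw [harg]
    exact pIcc_coe (by norm_num)
  · exact Set.empty_subset _
  · show hshift n (Nvec n x.2 j) x.1
      = hshift n (indVec n {k | s k = false ∧ 1 ≤ (x.2 k : ℝ) + j k} - indVec n ∅)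
          (hshift n (bN n s) x.1)
    refine (hshift_comp_eq _ _ x.1 fun k => ?_).symm
    simp only [Pi.sub_apply, indVec]
    by_cases hsk : s k = true
    · have hge : (1:ℝ) ≤ (x.2 k : ℝ) + j k := by have := hx' k; rwa [if_pos hsk] at this
      have hmem : k ∉ {k | s k = false ∧ 1 ≤ (x.2 k : ℝ) + j k} := by
        rintro ⟨h', _⟩; rw [hsk] at h'; cases h'
      simp [bN, hsk, Nvec, hge, hmem, Set.mem_setOf_eq]
    · have hsk' : s k = false := Bool.not_eq_true _ |>.mp hsk
      by_cases hge : (1:ℝ) ≤ (x.2 k : ℝ) + j k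
      · have hmem : k ∈ {k | s k = false ∧ 1 ≤ (x.2 k : ℝ) + j k} := ⟨hsk', hge⟩
        simp [bN, hsk, Nvec, hge, hmem, Set.mem_setOf_eq]
      · have hmem : k ∉ {k | s k = false ∧ 1 ≤ (x.2 k : ℝ) + j k} := by
          rintro ⟨_, h'⟩; exact hge h'
        simp [bN, hsk, Nvec, hge, hmem, Set.mem_setOf_eq]
  · funext k
    apply Subtype.ext
    rw [fpair2_coe hj]
    by_cases hsk : s k = true
    · have hge : (1:ℝ) ≤ (x.2 k : ℝ) + j k := by have := hx' k; rwa [if_pos hsk] at this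
      have hmem : k ∉ ({k | s k = false ∧ 1 ≤ (x.2 k : ℝ) + j k} ∪ ∅ : Set (Fin n)) := by
        rintro (⟨h', _⟩ | h')
        · rw [hsk] at h'; cases h'
        · cases h'
      rw [show psiFlip n _ ((FP n j (bN n s) x).2) k = (FP n j (bN n s) x).2 k from if_neg hmem]
      show _ = ((pIcc ((x.2 k : ℝ) + j k - ((bN n s k : ℤ) : ℝ))) : ℝ)
      have hNv : Nvec n x.2 j k = 1 := by simp [Nvec, hge]
      have hbn : bN n s k = 1 := by simp [bN, hsk]
      have hc : ((pIcc ((x.2 k : ℝ) + j k - ((bN n s k : ℤ) : ℝ))) : ℝ)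
          = (x.2 k : ℝ) + j k - ((bN n s k : ℤ) : ℝ) := by
        apply pIcc_coe
        rw [Set.mem_Icc, hbn]
        push_cast
        constructor <;> linarith [(hj k).1, (hj k).2, h0 k, h1 k]
      rw [hc, hbn, hNv]
    · have hsk' : s k = false := Bool.not_eq_true _ |>.mp hsk
      by_cases hge : (1:ℝ) ≤ (x.2 k : ℝ) + j k
      · have hle : (x.2 k : ℝ) + j k ≤ 1 := by have := hx' k; rwa [if_neg hsk] at this
        have hmem : k ∈ ({k | s k = false ∧ 1 ≤ (x.2 k : ℝ) + j k} ∪ ∅ : Set (Fin n)) :=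
          Or.inl ⟨hsk', hge⟩
        rw [show psiFlip n _ ((FP n j (bN n s) x).2) k
            = unitInterval.symm ((FP n j (bN n s) x).2 k) from if_pos hmem]
        rw [unitInterval.coe_symm_eq]
        show _ = 1 - ((pIcc ((x.2 k : ℝ) + j k - ((bN n s k : ℤ) : ℝ))) : ℝ)
        have hNv : Nvec n x.2 j k = 1 := by simp [Nvec, hge]
        have hbn : bN n s k = 0 := by simp [bN, hsk]
        have hc : ((pIcc ((x.2 k : ℝ) + j k - ((bN n s k : ℤ) : ℝ))) : ℝ)
            = (x.2 k : ℝ) + j k - ((bN n s k : ℤ) : ℝ) := by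
          apply pIcc_coe
          rw [Set.mem_Icc, hbn]
          push_cast
          constructor <;> linarith [(hj k).1, (hj k).2, h0 k, h1 k]
        rw [hc, hbn, hNv]
        push_cast
        linarith [le_antisymm hle hge]
      · have hmem : k ∉ ({k | s k = false ∧ 1 ≤ (x.2 k : ℝ) + j k} ∪ ∅ : Set (Fin n)) := by
          rintro (⟨_, h'⟩ | h')
          · exact hge h'
          · cases h'
        rw [show psiFlip n _ ((FP n j (bN n s) x).2) k = (FP n j (bN n s) x).2 k from if_neg hmem]
        show _ = ((pIcc ((x.2 k : ℝ) + j k - ((bN n s k : ℤ) : ℝ))) : ℝ)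
        have hNv : Nvec n x.2 j k = 0 := by simp [Nvec, hge]
        have hbn : bN n s k = 0 := by simp [bN, hsk]
        have hc : ((pIcc ((x.2 k : ℝ) + j k - ((bN n s k : ℤ) : ℝ))) : ℝ)
            = (x.2 k : ℝ) + j k - ((bN n s k : ℤ) : ℝ) := by
          apply pIcc_coe
          rw [Set.mem_Icc, hbn]
          push_cast
          constructor <;> linarith [not_le.mp hge, (hj k).1, (hj k).2, h0 k, h1 k]
        rw [hc, hbn, hNv]

lemma eqOnG (hj : ∀ k, j k ∈ Set.Ico (0:ℝ) 1) (s : Fin n → Bool) {x : XX n}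
    (hx : x ∈ CG n j s) :
    qmap n (gpair n j x) = qmap n (GP n j (bN n s) x) := by
  have hx' : ∀ k, if s k = true then (x.2 k : ℝ) ≤ j k else j k ≤ (x.2 k : ℝ) :=
    fun k => Set.mem_iInter.1 hx k
  have h0 : ∀ k, (0:ℝ) ≤ x.2 k := fun k => unitInterval.nonneg _
  have h1 : ∀ k, (x.2 k:ℝ) ≤ 1 := fun k => unitInterval.le_one _
  symm
  apply Quot.sound
  refine ⟨{k | s k = true ∧ (x.2 k : ℝ) = j k}, ∅, ?_, ?_, ?_, ?_⟩
  · rintro k ⟨hsk, heq⟩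
    show ((GP n j (bN n s) x).2 k : ℝ) = 1
    have harg : (x.2 k : ℝ) - j k + ((bN n s k : ℤ) : ℝ) = 1 := by
      simp [bN, hsk]; linarith
    show ((pIcc ((x.2 k : ℝ) - j k + ((bN n s k : ℤ) : ℝ))) : ℝ) = 1
    rw [harg]
    exact pIcc_coe (by norm_num)
  · exact Set.empty_subset _
  · show hshift n (-(Mvec n x.2 j)) x.1
      = hshift n (indVec n {k | s k = true ∧ (x.2 k : ℝ) = j k} - indVec n ∅)
          (hshift n (-(bN n s)) x.1)
    refine (hshift_comp_eq _ _ x.1 fun k => ?_).symm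
    simp only [Pi.sub_apply, Pi.neg_apply, indVec]
    by_cases hsk : s k = true
    · have hle : (x.2 k : ℝ) ≤ j k := by have := hx' k; rwa [if_pos hsk] at this
      rcases lt_or_eq_of_le hle with hlt | heq
      · have hmem : k ∉ {k | s k = true ∧ (x.2 k : ℝ) = j k} := by
          rintro ⟨_, h'⟩; exact absurd h' (ne_of_lt hlt)
        simp [bN, hsk, Mvec, hlt, hmem, Set.mem_setOf_eq]
      · have hmem : k ∈ {k | s k = true ∧ (x.2 k : ℝ) = j k} := ⟨hsk, heq⟩
        have hnlt : ¬ ((x.2 k : ℝ) < j k) := by rw [heq]; exact lt_irrefl _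
        simp [bN, hsk, Mvec, hnlt, hmem, Set.mem_setOf_eq]
    · have hge : j k ≤ (x.2 k : ℝ) := by have := hx' k; rwa [if_neg hsk] at this
      have hnlt : ¬ ((x.2 k : ℝ) < j k) := not_lt.mpr hge
      have hmem : k ∉ {k | s k = true ∧ (x.2 k : ℝ) = j k} := by
        rintro ⟨h', _⟩; exact hsk h'
      simp [bN, hsk, Mvec, hnlt, hmem, Set.mem_setOf_eq]
  · funext k
    apply Subtype.ext
    rw [gpair2_coe hj]
    by_cases hsk : s k = true
    · have hle : (x.2 k : ℝ) ≤ j k := by have := hx' k; rwa [if_pos hsk] at this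
      rcases lt_or_eq_of_le hle with hlt | heq
      · have hmem : k ∉ ({k | s k = true ∧ (x.2 k : ℝ) = j k} ∪ ∅ : Set (Fin n)) := by
          rintro (⟨_, h'⟩ | h')
          · exact absurd h' (ne_of_lt hlt)
          · cases h'
        rw [show psiFlip n _ ((GP n j (bN n s) x).2) k = (GP n j (bN n s) x).2 k from if_neg hmem]
        show _ = ((pIcc ((x.2 k : ℝ) - j k + ((bN n s k : ℤ) : ℝ))) : ℝ)
        have hMv : Mvec n x.2 j k = 1 := by simp [Mvec, hlt]
        have hbn : bN n s k = 1 := by simp [bN, hsk]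
        have hc : ((pIcc ((x.2 k : ℝ) - j k + ((bN n s k : ℤ) : ℝ))) : ℝ)
            = (x.2 k : ℝ) - j k + ((bN n s k : ℤ) : ℝ) := by
          apply pIcc_coe
          rw [Set.mem_Icc, hbn]
          push_cast
          constructor <;> linarith [(hj k).1, (hj k).2, h0 k, h1 k]
        rw [hc, hbn, hMv]
      · have hmem : k ∈ ({k | s k = true ∧ (x.2 k : ℝ) = j k} ∪ ∅ : Set (Fin n)) :=
          Or.inl ⟨hsk, heq⟩
        rw [show psiFlip n _ ((GP n j (bN n s) x).2) k
            = unitInterval.symm ((GP n j (bN n s) x).2 k) from if_pos hmem]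
        rw [unitInterval.coe_symm_eq]
        show _ = 1 - ((pIcc ((x.2 k : ℝ) - j k + ((bN n s k : ℤ) : ℝ))) : ℝ)
        have hnlt : ¬ ((x.2 k : ℝ) < j k) := by rw [heq]; exact lt_irrefl _
        have hMv : Mvec n x.2 j k = 0 := by simp [Mvec, hnlt]
        have hbn : bN n s k = 1 := by simp [bN, hsk]
        have hc : ((pIcc ((x.2 k : ℝ) - j k + ((bN n s k : ℤ) : ℝ))) : ℝ)
            = (x.2 k : ℝ) - j k + ((bN n s k : ℤ) : ℝ) := by
          apply pIcc_coe
          rw [Set.mem_Icc, hbn]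
          push_cast
          constructor <;> linarith [(hj k).1, (hj k).2, h0 k, h1 k]
        rw [hc, hbn, hMv]
        push_cast
        linarith
    · have hge : j k ≤ (x.2 k : ℝ) := by have := hx' k; rwa [if_neg hsk] at this
      have hnlt : ¬ ((x.2 k : ℝ) < j k) := not_lt.mpr hge
      have hmem : k ∉ ({k | s k = true ∧ (x.2 k : ℝ) = j k} ∪ ∅ : Set (Fin n)) := by
        rintro (⟨h', _⟩ | h')
        · exact hsk h'
        · cases h'
      rw [show psiFlip n _ ((GP n j (bN n s) x).2) k = (GP n j (bN n s) x).2 k from if_neg hmem]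
      show _ = ((pIcc ((x.2 k : ℝ) - j k + ((bN n s k : ℤ) : ℝ))) : ℝ)
      have hMv : Mvec n x.2 j k = 0 := by simp [Mvec, hnlt]
      have hbn : bN n s k = 0 := by simp [bN, hsk]
      have hc : ((pIcc ((x.2 k : ℝ) - j k + ((bN n s k : ℤ) : ℝ))) : ℝ)
          = (x.2 k : ℝ) - j k + ((bN n s k : ℤ) : ℝ) := by
        apply pIcc_coe
        rw [Set.mem_Icc, hbn]
        push_cast
        constructor <;> linarith [(hj k).1, (hj k).2, h0 k, h1 k]
      rw [hc, hbn, hMv]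

lemma cont_f (hj : ∀ k, j k ∈ Set.Ico (0:ℝ) 1) :
    Continuous (fun x : XX n => qmap n (fpair n j x)) := by
  refine (locallyFinite_of_finite (CF n j)).continuous (cover_CF n j) (closed_CF n j) fun s => ?_
  exact ((continuous_qFP n j (bN n s)).continuousOn).congr fun x hx => eqOnF hj s hx

lemma cont_g (hj : ∀ k, j k ∈ Set.Ico (0:ℝ) 1) :
    Continuous (fun x : XX n => qmap n (gpair n j x)) := by
  refine (locallyFinite_of_finite (CG n j)).continuous (cover_CG n j) (closed_CG n j) fun s => ?_
  exact ((continuous_qGP n j (bN n s)).continuousOn).congr fun x hx => eqOnG hj s hx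

/-! #### Inverses -/

lemma left_inv_rel (hj : ∀ k, j k ∈ Set.Ico (0:ℝ) 1) (x : XX n) :
    hrel n x (gpair n j (fpair n j x)) := by
  have hco : ∀ k, ((fpair n j x).2 k : ℝ) = (x.2 k : ℝ) + j k - (Nvec n x.2 j k : ℝ) :=
    fpair2_coe hj x
  have h0 : ∀ k, (0:ℝ) ≤ x.2 k := fun k => unitInterval.nonneg _
  have h1 : ∀ k, (x.2 k:ℝ) ≤ 1 := fun k => unitInterval.le_one _
  have hM : ∀ k, Mvec n (fpair n j x).2 j k = if (x.2 k : ℝ) = 1 then 0 else Nvec n x.2 j k := by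
    intro k
    by_cases hx1 : (x.2 k : ℝ) = 1
    · have hN : Nvec n x.2 j k = 1 := by
        have : (1:ℝ) ≤ (x.2 k:ℝ) + j k := by rw [hx1]; linarith [(hj k).1]
        simp [Nvec, this]
      have hnlt : ¬ (((fpair n j x).2 k : ℝ) < j k) := by
        rw [hco k, hx1, hN]; push_cast; push_neg; linarith
      simp [Mvec, hnlt, hx1]
    · by_cases hN : (1:ℝ) ≤ (x.2 k:ℝ) + j k
      · have hNv : Nvec n x.2 j k = 1 := by simp [Nvec, hN]
        have hlt : ((fpair n j x).2 k : ℝ) < j k := by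
          rw [hco k, hNv]; push_cast
          have := lt_of_le_of_ne (h1 k) hx1
          linarith
        simp [Mvec, hlt, hx1, hNv]
      · have hNv : Nvec n x.2 j k = 0 := by simp [Nvec, hN]
        have hnlt : ¬ (((fpair n j x).2 k : ℝ) < j k) := by
          rw [hco k, hNv]; push_cast; push_neg; linarith [h0 k]
        simp [Mvec, hnlt, hx1, hNv]
  refine ⟨Aset n x.2, ∅, subset_rfl, Set.empty_subset _, ?_, ?_⟩
  · show hshift n (-(Mvec n (fpair n j x).2 j)) (hshift n (Nvec n x.2 j) x.1)
      = hshift n (indVec n (Aset n x.2) - indVec n ∅) x.1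
    refine hshift_comp_eq _ _ x.1 fun k => ?_
    simp only [Pi.neg_apply, Pi.sub_apply, indVec, hM k]
    by_cases hx1 : (x.2 k : ℝ) = 1
    · have hN : Nvec n x.2 j k = 1 := by
        have : (1:ℝ) ≤ (x.2 k:ℝ) + j k := by rw [hx1]; linarith [(hj k).1]
        simp [Nvec, this]
      have hmem : k ∈ Aset n x.2 := hx1
      rw [if_pos hx1, if_pos hmem, if_neg (Set.notMem_empty k), hN]
      norm_num
    · have hmem : k ∉ Aset n x.2 := hx1
      rw [if_neg hx1, if_neg hmem, if_neg (Set.notMem_empty k)]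
      ring
  · show (gpair n j (fpair n j x)).2 = psiFlip n (Aset n x.2 ∪ ∅) x.2
    funext k
    apply Subtype.ext
    rw [gpair2_coe hj (fpair n j x) k, hco k, hM k]
    by_cases hx1 : (x.2 k : ℝ) = 1
    · have hN : Nvec n x.2 j k = 1 := by
        have : (1:ℝ) ≤ (x.2 k:ℝ) + j k := by rw [hx1]; linarith [(hj k).1]
        simp [Nvec, this]
      have hmem : k ∈ (Aset n x.2 ∪ ∅ : Set (Fin n)) := Or.inl hx1
      rw [show psiFlip n (Aset n x.2 ∪ ∅) x.2 k = unitInterval.symm (x.2 k) from if_pos hmem]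
      rw [unitInterval.coe_symm_eq, hx1, hN]
      norm_num
    · have hmem : k ∉ (Aset n x.2 ∪ ∅ : Set (Fin n)) := by
        rintro (h' | h')
        · exact hx1 h'
        · cases h'
      rw [show psiFlip n (Aset n x.2 ∪ ∅) x.2 k = x.2 k from if_neg hmem]
      rw [if_neg hx1]
      push_cast; ring

lemma right_inv_rel (hj : ∀ k, j k ∈ Set.Ico (0:ℝ) 1) (x : XX n) :
    hrel n x (fpair n j (gpair n j x)) := by
  have hco : ∀ k, ((gpair n j x).2 k : ℝ) = (x.2 k:ℝ) - j k + (Mvec n x.2 j k : ℝ) :=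
    gpair2_coe hj x
  have h0 : ∀ k, (0:ℝ) ≤ x.2 k := fun k => unitInterval.nonneg _
  have h1 : ∀ k, (x.2 k:ℝ) ≤ 1 := fun k => unitInterval.le_one _
  have hMone : ∀ k, (x.2 k : ℝ) = 1 → Mvec n x.2 j k = 0 := by
    intro k hx1
    have : ¬ ((x.2 k:ℝ) < j k) := by rw [hx1]; push_neg; linarith [(hj k).2]
    simp [Mvec, this]
  have hN : ∀ k, Nvec n (gpair n j x).2 j k
      = if (x.2 k : ℝ) = 1 then 1 else Mvec n x.2 j k := by
    intro k
    by_cases hx1 : (x.2 k : ℝ) = 1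
    · have hM := hMone k hx1
      have : (1:ℝ) ≤ ((gpair n j x).2 k : ℝ) + j k := by
        rw [hco k, hx1, hM]; push_cast; linarith
      simp [Nvec, this, hx1]
    · by_cases hM : (x.2 k : ℝ) < j k
      · have hMv : Mvec n x.2 j k = 1 := by simp [Mvec, hM]
        have : (1:ℝ) ≤ ((gpair n j x).2 k : ℝ) + j k := by
          rw [hco k, hMv]; push_cast; linarith [h0 k]
        simp [Nvec, this, hx1, hMv]
      · have hMv : Mvec n x.2 j k = 0 := by simp [Mvec, hM]
        have hlt : (x.2 k : ℝ) < 1 := lt_of_le_of_ne (h1 k) hx1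
        have : ¬ (1:ℝ) ≤ ((gpair n j x).2 k : ℝ) + j k := by
          rw [hco k, hMv]; push_cast; push_neg; linarith
        simp [Nvec, this, hx1, hMv]
  refine ⟨Aset n x.2, ∅, subset_rfl, Set.empty_subset _, ?_, ?_⟩
  · show hshift n (Nvec n (gpair n j x).2 j) (hshift n (-(Mvec n x.2 j)) x.1)
      = hshift n (indVec n (Aset n x.2) - indVec n ∅) x.1
    refine hshift_comp_eq _ _ x.1 fun k => ?_
    simp only [Pi.neg_apply, Pi.sub_apply, indVec, hN k]
    by_cases hx1 : (x.2 k : ℝ) = 1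
    · have hM := hMone k hx1
      have hmem : k ∈ Aset n x.2 := hx1
      rw [if_pos hx1, if_pos hmem, if_neg (Set.notMem_empty k), hM]
      norm_num
    · have hmem : k ∉ Aset n x.2 := hx1
      rw [if_neg hx1, if_neg hmem, if_neg (Set.notMem_empty k)]
      ring
  · show (fpair n j (gpair n j x)).2 = psiFlip n (Aset n x.2 ∪ ∅) x.2
    funext k
    apply Subtype.ext
    rw [fpair2_coe hj (gpair n j x) k, hco k, hN k]
    by_cases hx1 : (x.2 k : ℝ) = 1
    · have hM := hMone k hx1
      have hmem : k ∈ (Aset n x.2 ∪ ∅ : Set (Fin n)) := Or.inl hx1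
      rw [show psiFlip n (Aset n x.2 ∪ ∅) x.2 k = unitInterval.symm (x.2 k) from if_pos hmem]
      rw [unitInterval.coe_symm_eq, hx1, hM]
      norm_num
    · have hmem : k ∉ (Aset n x.2 ∪ ∅ : Set (Fin n)) := by
        rintro (h' | h')
        · exact hx1 h'
        · cases h'
      rw [show psiFlip n (Aset n x.2 ∪ ∅) x.2 k = x.2 k from if_neg hmem]
      rw [if_neg hx1]
      push_cast; ring

/-! #### The homeomorphism -/

/-- The forward map on the quotient. -/
def fwdK (n : ℕ) (j : Fin n → ℝ) (hj : ∀ k, j k ∈ Set.Ico (0:ℝ) 1) : Kspace n → Kspace n :=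
  Quot.lift (fun x => qmap n (fpair n j x))
    (fun _ _ h => congrArg (qmap n) (fpair_eq hj h))

/-- The backward map on the quotient. -/
def gwdK (n : ℕ) (j : Fin n → ℝ) (hj : ∀ k, j k ∈ Set.Ico (0:ℝ) 1) : Kspace n → Kspace n :=
  Quot.lift (fun x => qmap n (gpair n j x))
    (fun _ _ h => Quot.sound (gpair_rel hj h))

/-- The homeomorphism `Λ₂(j)`. -/
def LK (n : ℕ) (j : Fin n → ℝ) (hj : ∀ k, j k ∈ Set.Ico (0:ℝ) 1) : Kspace n ≃ₜ Kspace n where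
  toFun := fwdK n j hj
  invFun := gwdK n j hj
  left_inv := by
    intro a
    induction a using Quot.ind with
    | _ x => exact (Quot.sound (left_inv_rel hj x)).symm
  right_inv := by
    intro a
    induction a using Quot.ind with
    | _ x => exact (Quot.sound (right_inv_rel hj x)).symm
  continuous_toFun := continuous_quot_lift _ (cont_f hj)
  continuous_invFun := continuous_quot_lift _ (cont_g hj)

end Statement6Aux

theorem statement6 (n : ℕ) (hn : 1 ≤ n) (j : Fin n → ℝ)
    (hj : ∀ k, j k ∈ Set.Ico (0 : ℝ) 1) :
    (∀ (i : Fin n → unitInterval) (k : Fin n),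
      (i k : ℝ) + j k - (Nvec n i j k : ℝ) ∈ Set.Icc (0 : ℝ) 1) ∧
    ∃ L : Kspace n ≃ₜ Kspace n,
      ∀ (p : StoneCech (Fin n → ℤ)) (i i' : Fin n → unitInterval),
        (∀ k, (i' k : ℝ) = (i k : ℝ) + j k - (Nvec n i j k : ℝ)) →
        L (qmap n (p, i)) = qmap n (hshift n (Nvec n i j) p, i') := by
  open Statement6Aux in
  refine ⟨fun i k => memF hj i k, ⟨LK n j hj, ?_⟩⟩
  intro p i i' hi'
  have hpair : fpair n j (p, i) = (hshift n (Nvec n i j) p, i') := by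
    refine Prod.ext rfl ?_
    funext k
    apply Subtype.ext
    rw [hi' k]
    exact fpair2_coe hj (p, i) k
  have hL : (LK n j hj) (qmap n (p, i)) = qmap n (fpair n j (p, i)) := rfl
  rw [hL, hpair]
end
end

section
/- (Lemma 1) The map σ : ℝⁿ × K → K defined by σ(x, w) = Λ₁(⌊x⌋)(Λ₂({x})(w)) is a jointly continuous action of the additive topological group (ℝⁿ, +) on K: σ(0, w) = w and σ(x + y, w) = σ(x, σ(y, w)) for all x, y ∈ ℝⁿ and w ∈ K, and σ is continuous as a map ℝⁿ × K → K. -/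
open Set

noncomputable section

/-- Coordinatewise floor `⌊x⌋ ∈ ℤⁿ`. -/
def floorVec (n : ℕ) (x : Fin n → ℝ) : Fin n → ℤ := fun k => ⌊x k⌋

/-- Coordinatewise fractional part `{x} ∈ [0,1)ⁿ ⊆ Iⁿ`. -/
def fracVec (n : ℕ) (x : Fin n → ℝ) : Fin n → unitInterval :=
  fun k => ⟨Int.fract (x k), ⟨Int.fract_nonneg _, (Int.fract_lt_one _).le⟩⟩

/-- The map `e : ℝⁿ → K`, `e x = q(ι ⌊x⌋, {x})`. -/
def embMap (n : ℕ) (x : Fin n → ℝ) : Kspace n :=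
  qmap n (stoneCechUnit (floorVec n x), fracVec n x)
/-- `σ` satisfies the defining formula `σ(x, ·) = Λ₁(⌊x⌋) ∘ Λ₂({x})`, written out on
representatives: `σ(x, q(p, i)) = q(h_{⌊x⌋ + N}(p), i + {x} − N)` where `N_k = 1` iff
`i_k + {x}_k ≥ 1`. -/
def sigmaSpec (n : ℕ) (σ : (Fin n → ℝ) → Kspace n → Kspace n) : Prop :=
  ∀ (x : Fin n → ℝ) (p : StoneCech (Fin n → ℤ)) (i i' : Fin n → unitInterval),
    (∀ k, (i' k : ℝ) =
      (i k : ℝ) + Int.fract (x k) - (Nvec n i (fun k => Int.fract (x k)) k : ℝ)) →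
    σ x (qmap n (p, i)) =
      qmap n (hshift n (floorVec n x + Nvec n i (fun k => Int.fract (x k))) p, i')

namespace Statement7Aux

open Classical Set Topology Filter

variable {n : ℕ}

lemma hshift_unit (N z : Fin n → ℤ) :
    hshift n N (stoneCechUnit z) = stoneCechUnit (z + N) := by
  have h := stoneCechExtend_extends (g := fun z : Fin n → ℤ => stoneCechUnit (z + N))
    (continuous_stoneCechUnit.comp continuous_of_discreteTopology)
  exact congrFun h z

lemma continuous_hshift (N : Fin n → ℤ) : Continuous (hshift n N) :=
  continuous_stoneCechExtend _

lemma hshift_hshift (M N : Fin n → ℤ) (p : StoneCech (Fin n → ℤ)) :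
    hshift n M (hshift n N p) = hshift n (N + M) p := by
  have h : hshift n M ∘ hshift n N = hshift n (N + M) := by
    apply stoneCech_hom_ext ((continuous_hshift M).comp (continuous_hshift N))
      (continuous_hshift _)
    funext z
    simp only [Function.comp_apply, hshift_unit, add_assoc]
  exact congrFun h p

/-- The basic continuous-pieces map. -/
def Gfun (n : ℕ) : StoneCech (Fin n → ℤ) × (Fin n → ℝ) → Kspace n :=
  fun py => qmap n (hshift n (floorVec n py.2) py.1, fracVec n py.2)

lemma G_eq_of_rep (p : StoneCech (Fin n → ℤ)) (M : Fin n → ℤ) (y : Fin n → ℝ)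
    (hb : ∀ k, (M k : ℝ) ≤ y k ∧ y k ≤ M k + 1) :
    qmap n (hshift n M p,
      fun k => (Set.projIcc (0:ℝ) 1 zero_le_one (y k - M k) : unitInterval)) = Gfun n (p, y) := by
  have hmem : ∀ k, y k - M k ∈ Set.Icc (0:ℝ) 1 :=
    fun k => ⟨by linarith [(hb k).1], by linarith [(hb k).2]⟩
  have hproj : ∀ k, ((Set.projIcc (0:ℝ) 1 zero_le_one (y k - M k) : unitInterval) : ℝ)
      = y k - M k := by
    intro k; rw [Set.projIcc_of_mem _ (hmem k)]
  have hfloor : ∀ k, y k ≠ (M k : ℝ) + 1 → ⌊y k⌋ = M k := by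
    intro k hk
    rw [Int.floor_eq_iff]
    exact ⟨(hb k).1, lt_of_le_of_ne (by push_cast; exact (hb k).2) (by push_cast; exact hk)⟩
  apply Quot.sound
  refine ⟨{k | y k = (M k : ℝ) + 1}, ∅, ?_, Set.empty_subset _, ?_, ?_⟩
  · intro k hk
    have hy : y k = (M k : ℝ) + 1 := hk
    show ((Set.projIcc (0:ℝ) 1 zero_le_one (y k - M k) : unitInterval) : ℝ) = 1
    rw [hproj k, hy]
    ring
  · show hshift n (floorVec n y) p
      = hshift n (indVec n {k | y k = (M k : ℝ) + 1} - indVec n ∅) (hshift n M p)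
    rw [hshift_hshift]
    congr 1
    funext k
    simp only [floorVec, Pi.add_apply, Pi.sub_apply, indVec]
    rw [if_neg (Set.notMem_empty k)]
    by_cases hk : y k = (M k : ℝ) + 1
    · have hfk : ⌊y k⌋ = M k + 1 := by
        rw [hk, ← Int.cast_one, ← Int.cast_add, Int.floor_intCast]
      rw [if_pos (show k ∈ {k | y k = (M k : ℝ) + 1} from hk), hfk]
      ring
    · rw [if_neg (show k ∉ {k | y k = (M k : ℝ) + 1} from hk), hfloor k hk]
      ring
  · funext k
    apply Subtype.ext
    show Int.fract (y k) = _
    simp only [psiFlip]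
    by_cases hk : y k = (M k : ℝ) + 1
    · have h2 : k ∈ ({k | y k = (M k : ℝ) + 1} : Set (Fin n)) ∪ ∅ :=
        Set.mem_union_left _ hk
      rw [if_pos h2, unitInterval.coe_symm_eq, hproj k, hk, Int.fract_intCast_add, Int.fract_one]
      ring
    · have h2 : k ∉ ({k | y k = (M k : ℝ) + 1} : Set (Fin n)) ∪ ∅ := by
        rintro (hh | hh)
        · exact hk hh
        · exact hh
      rw [if_neg h2, hproj k, ← Int.self_sub_floor, hfloor k hk]

/-- Local data for the continuity proof. -/
def pdelta (y₀ : Fin n → ℝ) (k : Fin n) : ℝ :=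
  if Int.fract (y₀ k) = 0 then 1/2 else min (Int.fract (y₀ k)) (1 - Int.fract (y₀ k)) / 2

def pM (y₀ : Fin n → ℝ) (ε : Fin n → Bool) (k : Fin n) : ℤ :=
  if ε k = false ∧ Int.fract (y₀ k) = 0 then ⌊y₀ k⌋ - 1 else ⌊y₀ k⌋

def plo (y₀ : Fin n → ℝ) (ε : Fin n → Bool) (k : Fin n) : ℝ :=
  if ε k = true then y₀ k else y₀ k - pdelta y₀ k

def phi (y₀ : Fin n → ℝ) (ε : Fin n → Bool) (k : Fin n) : ℝ :=
  if ε k = true then y₀ k + pdelta y₀ k else y₀ k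

lemma pdelta_pos (y₀ : Fin n → ℝ) (k : Fin n) : 0 < pdelta y₀ k := by
  unfold pdelta
  by_cases h : Int.fract (y₀ k) = 0
  · rw [if_pos h]; norm_num
  · rw [if_neg h]
    have h0 := Int.fract_nonneg (y₀ k)
    have h1 := Int.fract_lt_one (y₀ k)
    have : 0 < Int.fract (y₀ k) := lt_of_le_of_ne h0 (Ne.symm h)
    have : 0 < min (Int.fract (y₀ k)) (1 - Int.fract (y₀ k)) := lt_min this (by linarith)
    linarith

lemma pbound (y₀ : Fin n → ℝ) (ε : Fin n → Bool) (y : Fin n → ℝ)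
    (hy : ∀ k, y k ∈ Set.Icc (plo y₀ ε k) (phi y₀ ε k)) (k : Fin n) :
    (pM y₀ ε k : ℝ) ≤ y k ∧ y k ≤ pM y₀ ε k + 1 := by
  obtain ⟨h1, h2⟩ := hy k
  have hfl : (⌊y₀ k⌋ : ℝ) ≤ y₀ k := Int.floor_le _
  have hfr : (⌊y₀ k⌋ : ℝ) + Int.fract (y₀ k) = y₀ k := Int.floor_add_fract _
  have h0 := Int.fract_nonneg (y₀ k)
  have hlt := Int.fract_lt_one (y₀ k)
  by_cases hb : ε k = true
  · -- plo = y₀ k, phi = y₀ k + δ, M = ⌊y₀ k⌋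
    rw [plo, if_pos hb] at h1
    rw [phi, if_pos hb] at h2
    have hM : pM y₀ ε k = ⌊y₀ k⌋ := by
      unfold pM; rw [if_neg]; rintro ⟨hf, -⟩; rw [hb] at hf; exact Bool.noConfusion hf
    rw [hM]
    have hfd : Int.fract (y₀ k) + pdelta y₀ k ≤ 1 := by
      unfold pdelta
      by_cases h : Int.fract (y₀ k) = 0
      · rw [if_pos h, h]; norm_num
      · rw [if_neg h]
        have : min (Int.fract (y₀ k)) (1 - Int.fract (y₀ k)) ≤ 1 - Int.fract (y₀ k) :=
          min_le_right _ _
        linarith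
    constructor
    · linarith
    · push_cast; linarith
  · have hb' : ε k = false := by
      cases hbe : ε k
      · rfl
      · exact absurd hbe hb
    rw [plo, if_neg hb] at h1
    rw [phi, if_neg hb] at h2
    by_cases h : Int.fract (y₀ k) = 0
    · have hM : pM y₀ ε k = ⌊y₀ k⌋ - 1 := by unfold pM; rw [if_pos ⟨hb', h⟩]
      have hyy : y₀ k = (⌊y₀ k⌋ : ℝ) := by rw [h, add_zero] at hfr; linarith
      have hd : pdelta y₀ k ≤ 1 := by
        unfold pdelta; rw [if_pos h]; norm_num
      rw [hM]
      constructor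
      · push_cast; linarith
      · push_cast; linarith
    · have hM : pM y₀ ε k = ⌊y₀ k⌋ := by
        unfold pM; rw [if_neg]; rintro ⟨-, hf⟩; exact h hf
      have hd : pdelta y₀ k ≤ Int.fract (y₀ k) := by
        unfold pdelta; rw [if_neg h]
        have : min (Int.fract (y₀ k)) (1 - Int.fract (y₀ k)) ≤ Int.fract (y₀ k) :=
          min_le_left _ _
        have : 0 < Int.fract (y₀ k) := lt_of_le_of_ne h0 (Ne.symm h)
        linarith [min_le_left (Int.fract (y₀ k)) (1 - Int.fract (y₀ k))]
      rw [hM]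
      constructor
      · linarith
      · push_cast; linarith

lemma pcenter (y₀ : Fin n → ℝ) (ε : Fin n → Bool) (k : Fin n) :
    y₀ k ∈ Set.Icc (plo y₀ ε k) (phi y₀ ε k) := by
  have := pdelta_pos y₀ k
  unfold plo phi
  by_cases hb : ε k = true
  · rw [if_pos hb, if_pos hb]; constructor <;> linarith
  · rw [if_neg hb, if_neg hb]; constructor <;> linarith

lemma continuous_Gfun : Continuous (Gfun n) := by
  rw [continuous_iff_continuousAt]
  rintro ⟨p₀, y₀⟩
  set S : (Fin n → Bool) → Set (StoneCech (Fin n → ℤ) × (Fin n → ℝ)) :=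
    fun ε => {py | ∀ k, py.2 k ∈ Set.Icc (plo y₀ ε k) (phi y₀ ε k)} with hS
  apply ContinuousWithinAt.continuousAt (s := ⋃ ε, S ε)
  · rw [ContinuousWithinAt, nhdsWithin_iUnion, tendsto_iSup]
    intro ε
    have hc : Continuous (fun py : StoneCech (Fin n → ℤ) × (Fin n → ℝ) =>
        qmap n (hshift n (pM y₀ ε) py.1,
          fun k => (Set.projIcc (0:ℝ) 1 zero_le_one (py.2 k - pM y₀ ε k) : unitInterval))) := by
      apply continuous_quot_mk.comp
      refine Continuous.prodMk ((continuous_hshift _).comp continuous_fst) ?_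
      exact continuous_pi fun k => continuous_projIcc.comp
        (((continuous_apply k).comp continuous_snd).sub continuous_const)
    refine (hc.continuousAt.continuousWithinAt).congr ?_ ?_
    · intro py hpy
      exact (G_eq_of_rep py.1 (pM y₀ ε) py.2 (pbound y₀ ε py.2 hpy)).symm
    · exact (G_eq_of_rep p₀ (pM y₀ ε) y₀ (pbound y₀ ε y₀ (pcenter y₀ ε))).symm
  · have hU : Set.Icc (fun k => y₀ k - pdelta y₀ k) (fun k => y₀ k + pdelta y₀ k)
        ∈ 𝓝 y₀ := by
      apply pi_Icc_mem_nhds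
      · intro k
        have := pdelta_pos y₀ k
        show y₀ k - pdelta y₀ k < y₀ k
        linarith
      · intro k
        have := pdelta_pos y₀ k
        show y₀ k < y₀ k + pdelta y₀ k
        linarith
    have hT : (Prod.snd ⁻¹'
        Set.Icc (fun k => y₀ k - pdelta y₀ k) (fun k => y₀ k + pdelta y₀ k) :
        Set (StoneCech (Fin n → ℤ) × (Fin n → ℝ))) ∈ 𝓝 (p₀, y₀) :=
      continuous_snd.continuousAt.preimage_mem_nhds hU
    apply Filter.mem_of_superset hT
    rintro ⟨p, y⟩ hpy
    obtain ⟨hlo, hhi⟩ := hpy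
    refine Set.mem_iUnion.mpr ⟨fun k => if y₀ k ≤ y k then true else false, fun k => ?_⟩
    by_cases h : y₀ k ≤ y k
    · constructor
      · rw [plo, if_pos (by rw [if_pos h])]; exact h
      · rw [phi, if_pos (by rw [if_pos h])]; exact hhi k
    · constructor
      · rw [plo, if_neg (by rw [if_neg h]; exact Bool.false_ne_true)]; exact hlo k
      · rw [phi, if_neg (by rw [if_neg h]; exact Bool.false_ne_true)]
        exact le_of_not_ge h

/-- real coordinates of a point of the cube -/
def rv (i : Fin n → unitInterval) : Fin n → ℝ := fun k => (i k : ℝ)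

lemma Gfun_wd (x : Fin n → ℝ) (a b : StoneCech (Fin n → ℤ) × (Fin n → unitInterval))
    (hab : hrel n a b) : Gfun n (a.1, x + rv a.2) = Gfun n (b.1, x + rv b.2) := by
  obtain ⟨A, B, hA, hB, h1, h2⟩ := hab
  have hAB : ∀ k, k ∈ A → k ∉ B := by
    intro k hkA hkB
    have e1 : (a.2 k : ℝ) = 1 := hA hkA
    have e0 : (a.2 k : ℝ) = 0 := hB hkB
    norm_num [e1] at e0
  have hval : ∀ k, (b.2 k : ℝ) =
      if k ∈ A ∪ B then 1 - (a.2 k : ℝ) else (a.2 k : ℝ) := by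
    intro k
    rw [h2]
    by_cases hk : k ∈ A ∪ B
    · simp only [psiFlip, if_pos hk, unitInterval.coe_symm_eq]
    · simp only [psiFlip, if_neg hk]
  have hfr : ∀ k, Int.fract (x k + (b.2 k : ℝ)) = Int.fract (x k + (a.2 k : ℝ)) := by
    intro k
    rcases Classical.em (k ∈ A) with hkA | hkA
    · rw [hval k, if_pos (Set.mem_union_left _ hkA), hA hkA]
      norm_num [Int.fract_add_one]
    · rcases Classical.em (k ∈ B) with hkB | hkB
      · rw [hval k, if_pos (Set.mem_union_right _ hkB), hB hkB]
        norm_num [Int.fract_add_one]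
      · rw [hval k, if_neg (fun h => (((Set.mem_union _ _ _).mp h).elim hkA hkB))]
  have hflr : (indVec n A - indVec n B) + floorVec n (x + rv b.2) = floorVec n (x + rv a.2) := by
    funext k
    simp only [Pi.add_apply, Pi.sub_apply, indVec, floorVec, rv]
    rcases Classical.em (k ∈ A) with hkA | hkA
    · rw [if_pos hkA, if_neg (hAB k hkA), hval k, if_pos (Set.mem_union_left _ hkA), hA hkA]
      norm_num [Int.floor_add_one]
      omega
    · rcases Classical.em (k ∈ B) with hkB | hkB
      · have e0 : (a.2 k : ℝ) = 0 := hB hkB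
        have hkA' : k ∉ A := fun h => hAB k h hkB
        rw [if_neg hkA', if_pos hkB, hval k, if_pos (Set.mem_union_right _ hkB), e0]
        norm_num [Int.floor_add_one]
      · rw [if_neg hkA, if_neg hkB, hval k, if_neg (fun h => (((Set.mem_union _ _ _).mp h).elim hkA hkB))]
        omega
  have hfrv : fracVec n (x + rv a.2) = fracVec n (x + rv b.2) := by
    funext k
    apply Subtype.ext
    show Int.fract (x k + (a.2 k : ℝ)) = Int.fract (x k + (b.2 k : ℝ))
    exact (hfr k).symm
  show qmap n (hshift n (floorVec n (x + rv a.2)) a.1, fracVec n (x + rv a.2))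
      = qmap n (hshift n (floorVec n (x + rv b.2)) b.1, fracVec n (x + rv b.2))
  rw [h1, hshift_hshift, ← hflr, hfrv]

lemma floor_fract_aux (a c : ℝ) (hc0 : 0 ≤ c) (hc1 : c ≤ 1) :
    (⌊a + c⌋ = ⌊a⌋ + (if 1 ≤ c + Int.fract a then (1:ℤ) else 0)) ∧
    (Int.fract (a + c) = c + Int.fract a - (((if 1 ≤ c + Int.fract a then (1:ℤ) else 0) : ℤ) : ℝ)) := by
  have h0 := Int.fract_nonneg a
  have h1 := Int.fract_lt_one a
  have hfa := Int.floor_add_fract a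
  have hsum : a + c = (Int.fract a + c) + (⌊a⌋ : ℝ) := by linarith
  by_cases h : 1 ≤ c + Int.fract a
  · have hfl : ⌊Int.fract a + c⌋ = 1 := by
      rw [Int.floor_eq_iff]
      push_cast
      constructor <;> linarith
    constructor
    · rw [if_pos h, hsum, Int.floor_add_intCast, hfl]
      omega
    · rw [if_pos h, hsum, Int.fract_add_intCast, ← Int.self_sub_floor, hfl]
      push_cast
      ring
  · have hfl : ⌊Int.fract a + c⌋ = 0 := by
      rw [Int.floor_eq_iff]
      push_cast
      constructor <;> linarith [lt_of_not_ge h]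
    constructor
    · rw [if_neg h, hsum, Int.floor_add_intCast, hfl]
      omega
    · rw [if_neg h, hsum, Int.fract_add_intCast, ← Int.self_sub_floor, hfl]
      push_cast
      ring


end Statement7Aux


open Statement7Aux in
theorem statement7 (n : ℕ) (hn : 1 ≤ n) :
    ∃ σ : (Fin n → ℝ) → Kspace n → Kspace n,
      sigmaSpec n σ ∧
      Continuous (fun xw : (Fin n → ℝ) × Kspace n => σ xw.1 xw.2) ∧
      (∀ w : Kspace n, σ 0 w = w) ∧
      (∀ (x y : Fin n → ℝ) (w : Kspace n), σ (x + y) w = σ x (σ y w)) := by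
  classical
  refine ⟨fun x => Quot.lift (fun pi : StoneCech (Fin n → ℤ) × (Fin n → unitInterval) =>
      Gfun n (pi.1, x + rv pi.2)) (Gfun_wd x), ?_, ?_, ?_, ?_⟩
  · -- sigmaSpec
    intro x p i i' hi'
    show Gfun n (p, x + rv i) = _
    unfold Gfun
    have hfl : floorVec n (x + rv i) = floorVec n x + Nvec n i (fun k => Int.fract (x k)) := by
      funext k
      have h := (floor_fract_aux (x k) (i k : ℝ) (i k).2.1 (i k).2.2).1
      simp only [floorVec, Pi.add_apply, rv, Nvec]
      exact h
    have hfr : fracVec n (x + rv i) = i' := by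
      funext k
      apply Subtype.ext
      have h := (floor_fract_aux (x k) (i k : ℝ) (i k).2.1 (i k).2.2).2
      have h2 := hi' k
      simp only [Nvec] at h2
      simp only [fracVec, Pi.add_apply, rv]
      rw [h, h2]
    rw [hfl, hfr]
  · -- continuity
    apply Topology.IsQuotientMap.continuous_lift_prod_right
      (f := Quot.mk (hrel n)) isQuotientMap_quot_mk
    show Continuous fun pr : (Fin n → ℝ) × (StoneCech (Fin n → ℤ) × (Fin n → unitInterval)) =>
      Gfun n (pr.2.1, pr.1 + rv pr.2.2)
    apply continuous_Gfun.comp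
    refine Continuous.prodMk (continuous_fst.comp continuous_snd) ?_
    apply continuous_pi
    intro k
    show Continuous fun pr : (Fin n → ℝ) × (StoneCech (Fin n → ℤ) × (Fin n → unitInterval)) =>
      pr.1 k + ((pr.2.2 k : ℝ))
    exact ((continuous_apply k).comp continuous_fst).add
      (continuous_subtype_val.comp ((continuous_apply k).comp
        (continuous_snd.comp continuous_snd)))
  · -- identity
    intro w
    induction w using Quot.ind with
    | _ pi =>
      obtain ⟨p, i⟩ := pi
      show Gfun n (p, 0 + rv i) = Quot.mk (hrel n) (p, i)
      rw [zero_add]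
      symm
      apply Quot.sound
      refine ⟨Aset n i, ∅, le_refl _, Set.empty_subset _, ?_, ?_⟩
      · show hshift n (floorVec n (rv i)) p = hshift n (indVec n (Aset n i) - indVec n ∅) p
        congr 1
        funext k
        have h0 : (0:ℝ) ≤ (i k : ℝ) := (i k).2.1
        have h1 : (i k : ℝ) ≤ 1 := (i k).2.2
        simp only [floorVec, rv, Pi.sub_apply, indVec]
        by_cases h : (i k : ℝ) = 1
        · rw [if_pos (show k ∈ Aset n i from h), if_neg (Set.notMem_empty k), h]
          norm_num
        · rw [if_neg (show k ∉ Aset n i from h), if_neg (Set.notMem_empty k)]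
          have : ⌊(i k : ℝ)⌋ = 0 := Int.floor_eq_zero_iff.mpr ⟨h0, lt_of_le_of_ne h1 h⟩
          omega
      · show fracVec n (rv i) = psiFlip n (Aset n i ∪ ∅) i
        funext k
        apply Subtype.ext
        have h0 : (0:ℝ) ≤ (i k : ℝ) := (i k).2.1
        have h1 : (i k : ℝ) ≤ 1 := (i k).2.2
        show Int.fract ((i k : ℝ)) = _
        simp only [psiFlip]
        by_cases h : (i k : ℝ) = 1
        · have hmem : k ∈ Aset n i ∪ ∅ := Set.mem_union_left _ h
          rw [if_pos hmem, unitInterval.coe_symm_eq, h, Int.fract_one]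
          ring
        · have hmem : k ∉ Aset n i ∪ ∅ := by
            rintro (hh | hh)
            · exact h hh
            · exact hh
          rw [if_neg hmem]
          exact Int.fract_eq_self.mpr ⟨h0, lt_of_le_of_ne h1 h⟩
  · -- additivity
    intro x y w
    induction w using Quot.ind with
    | _ pi =>
      obtain ⟨p, i⟩ := pi
      show qmap n (hshift n (floorVec n (x + y + rv i)) p, fracVec n (x + y + rv i))
        = qmap n (hshift n (floorVec n (x + rv (fracVec n (y + rv i))))
            (hshift n (floorVec n (y + rv i)) p), fracVec n (x + rv (fracVec n (y + rv i))))
      rw [hshift_hshift]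
      have hsum : ∀ k, x k + y k + (i k : ℝ) =
          (x k + Int.fract (y k + (i k : ℝ))) + (⌊y k + (i k : ℝ)⌋ : ℝ) := by
        intro k
        have := Int.floor_add_fract (y k + (i k : ℝ))
        linarith
      have hfl2 : floorVec n (y + rv i) + floorVec n (x + rv (fracVec n (y + rv i)))
          = floorVec n (x + y + rv i) := by
        funext k
        show ⌊y k + (i k : ℝ)⌋ + ⌊x k + Int.fract (y k + (i k : ℝ))⌋ = ⌊x k + y k + (i k : ℝ)⌋
        rw [hsum k, Int.floor_add_intCast]
        omega
      have hfr2 : fracVec n (x + rv (fracVec n (y + rv i))) = fracVec n (x + y + rv i) := by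
        funext k
        apply Subtype.ext
        show Int.fract (x k + Int.fract (y k + (i k : ℝ))) = Int.fract (x k + y k + (i k : ℝ))
        rw [hsum k, Int.fract_add_intCast]
      rw [hfl2, hfr2]
end
end

section
/- (Separation lemma, key step of Theorem 2) Let V and V' be closed subsets of ℝⁿ and suppose there exists ε > 0 such that (U_ε + V) ∩ V' = ∅, where U_ε = (−ε, ε)ⁿ. Then the closures of e(V) and e(V') in K are disjoint: cl_K e(V) ∩ cl_K e(V') = ∅. -/
open Set

noncomputable section

section Separation

variable {n : ℕ}


def clipf (ε : ℝ) (V : Set (Fin n → ℝ)) (x : Fin n → ℝ) : ℝ :=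
  min 1 (Metric.infDist x V / ε)

lemma clipf_mem (ε : ℝ) (hε : 0 < ε) (V : Set (Fin n → ℝ)) (x : Fin n → ℝ) :
    clipf ε V x ∈ Icc (0:ℝ) 1 :=
  ⟨le_min zero_le_one (div_nonneg Metric.infDist_nonneg hε.le), min_le_left _ _⟩

lemma min_lip (c a b : ℝ) : |min c a - min c b| ≤ |a - b| := by
  have h := le_abs_self (a - b)
  have h' := neg_abs_le (a - b)
  rw [abs_sub_le_iff]
  constructor
  · rcases min_cases c b with ⟨h1, h2⟩ | ⟨h1, h2⟩ <;> rw [h1]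
    · have := min_le_left c a; linarith
    · have := min_le_right c a; linarith
  · rcases min_cases c a with ⟨h1, h2⟩ | ⟨h1, h2⟩ <;> rw [h1]
    · have := min_le_left c b; linarith
    · have := min_le_right c b; linarith

lemma clipf_lip (ε : ℝ) (hε : 0 < ε) (V : Set (Fin n → ℝ)) (x y : Fin n → ℝ) :
    |clipf ε V x - clipf ε V y| ≤ dist x y / ε := by
  have h1 : |Metric.infDist x V - Metric.infDist y V| ≤ dist x y := by
    rw [abs_sub_le_iff]
    constructor
    · have := Metric.infDist_le_infDist_add_dist (x := x) (y := y) (s := V); linarith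
    · have h := Metric.infDist_le_infDist_add_dist (x := y) (y := x) (s := V)
      rw [dist_comm] at h; linarith
  calc |clipf ε V x - clipf ε V y| ≤ |Metric.infDist x V / ε - Metric.infDist y V / ε| :=
        min_lip 1 _ _
    _ = |Metric.infDist x V - Metric.infDist y V| / ε := by
        rw [div_sub_div_same, abs_div, abs_of_pos hε]
    _ ≤ dist x y / ε := by gcongr

/-- The real point `z + i`. -/
def realPt (z : Fin n → ℤ) (i : Fin n → unitInterval) : Fin n → ℝ :=
  fun k => (z k : ℝ) + (i k : ℝ)

def gfun (ε : ℝ) (V : Set (Fin n → ℝ)) (z : Fin n → ℤ) :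
    (Fin n → unitInterval) → Icc (0:ℝ) 1 :=
  fun i => Set.projIcc 0 1 zero_le_one (clipf ε V (realPt z i))

def Hext (ε : ℝ) (V : Set (Fin n → ℝ)) :
    StoneCech (Fin n → ℤ) → ((Fin n → unitInterval) → Icc (0:ℝ) 1) :=
  stoneCechExtend (g := gfun ε V) continuous_of_discreteTopology

lemma Hext_unit (ε : ℝ) (V : Set (Fin n → ℝ)) (z : Fin n → ℤ) :
    Hext ε V (stoneCechUnit z) = gfun ε V z :=
  congrFun (stoneCechExtend_extends _) z

lemma gfun_coe (ε : ℝ) (hε : 0 < ε) (V : Set (Fin n → ℝ)) (z : Fin n → ℤ)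
    (i : Fin n → unitInterval) : (gfun ε V z i : ℝ) = clipf ε V (realPt z i) := by
  rw [gfun, Set.projIcc_of_mem _ (clipf_mem ε hε V _)]

lemma realPt_dist_le (z : Fin n → ℤ) (i j : Fin n → unitInterval) :
    dist (realPt z i) (realPt z j) ≤ dist i j := by
  rw [dist_pi_le_iff dist_nonneg]
  intro k
  have : dist (realPt z i k) (realPt z j k) = dist (i k) (j k) := by
    rw [Subtype.dist_eq, realPt, realPt]
    exact dist_add_left _ _ _
  rw [this]
  exact dist_le_pi_dist i j k

lemma Hext_lip (ε : ℝ) (hε : 0 < ε) (V : Set (Fin n → ℝ)) (p : StoneCech (Fin n → ℤ))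
    (i j : Fin n → unitInterval) :
    |(Hext ε V p i : ℝ) - (Hext ε V p j : ℝ)| ≤ dist i j / ε := by
  have hcl : IsClosed {p : StoneCech (Fin n → ℤ) |
      |(Hext ε V p i : ℝ) - (Hext ε V p j : ℝ)| ≤ dist i j / ε} := by
    apply isClosed_le _ continuous_const
    apply Continuous.abs
    apply Continuous.sub
    · exact continuous_subtype_val.comp ((continuous_apply i).comp
        (continuous_stoneCechExtend _))
    · exact continuous_subtype_val.comp ((continuous_apply j).comp
        (continuous_stoneCechExtend _))
  have hsub : Set.range (stoneCechUnit : (Fin n → ℤ) → _) ⊆ {p : StoneCech (Fin n → ℤ) |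
      |(Hext ε V p i : ℝ) - (Hext ε V p j : ℝ)| ≤ dist i j / ε} := by
    rintro _ ⟨z, rfl⟩
    simp only [Set.mem_setOf_eq, Hext_unit, gfun_coe ε hε]
    exact (clipf_lip ε hε V _ _).trans (by gcongr; exact realPt_dist_le z i j)
  have := hcl.closure_subset_iff.mpr hsub
  rw [denseRange_stoneCechUnit.closure_eq] at this
  exact this (Set.mem_univ p)

def Gfun (ε : ℝ) (V : Set (Fin n → ℝ)) :
    StoneCech (Fin n → ℤ) × (Fin n → unitInterval) → ℝ :=
  fun x => (Hext ε V x.1 x.2 : ℝ)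

lemma Gfun_cont (ε : ℝ) (hε : 0 < ε) (V : Set (Fin n → ℝ)) : Continuous (Gfun ε V) := by
  rw [continuous_iff_continuousAt]
  rintro ⟨p₀, i₀⟩
  rw [ContinuousAt, Metric.tendsto_nhds]
  intro δ hδ
  have hφ : Continuous (fun q : StoneCech (Fin n → ℤ) × (Fin n → unitInterval) =>
      (Hext ε V q.1 i₀ : ℝ)) :=
    continuous_subtype_val.comp (((continuous_apply i₀).comp
      (continuous_stoneCechExtend _)).comp continuous_fst)
  have h1 : ∀ᶠ q : StoneCech (Fin n → ℤ) × (Fin n → unitInterval) in nhds (p₀, i₀),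
      dist ((Hext ε V q.1 i₀ : ℝ)) ((Hext ε V p₀ i₀ : ℝ)) < δ / 2 :=
    Metric.tendsto_nhds.1 (hφ.tendsto (p₀, i₀)) (δ / 2) (by positivity)
  have h2 : ∀ᶠ q : StoneCech (Fin n → ℤ) × (Fin n → unitInterval) in nhds (p₀, i₀),
      dist q.2 i₀ < δ / 2 * ε :=
    Metric.tendsto_nhds.1 (continuous_snd.tendsto (p₀, i₀)) (δ / 2 * ε) (by positivity)
  filter_upwards [h1, h2] with q hq1 hq2
  have key : |(Hext ε V q.1 q.2 : ℝ) - (Hext ε V q.1 i₀ : ℝ)| ≤ dist q.2 i₀ / ε :=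
    Hext_lip ε hε V q.1 q.2 i₀
  have h3 : dist q.2 i₀ / ε < δ / 2 := (div_lt_iff₀ hε).2 hq2
  rw [Real.dist_eq] at hq1 ⊢
  have := abs_sub_abs_le_abs_sub ((Hext ε V q.1 q.2 : ℝ) - (Hext ε V p₀ i₀ : ℝ))
    ((Hext ε V q.1 i₀ : ℝ) - (Hext ε V p₀ i₀ : ℝ))
  calc |(Gfun ε V q) - Gfun ε V (p₀, i₀)|
      = |(Hext ε V q.1 q.2 : ℝ) - (Hext ε V p₀ i₀ : ℝ)| := rfl
    _ ≤ |(Hext ε V q.1 q.2 : ℝ) - (Hext ε V q.1 i₀ : ℝ)|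
        + |(Hext ε V q.1 i₀ : ℝ) - (Hext ε V p₀ i₀ : ℝ)| := by
          have := abs_sub_le ((Hext ε V q.1 q.2 : ℝ)) ((Hext ε V q.1 i₀ : ℝ)) ((Hext ε V p₀ i₀ : ℝ))
          linarith
    _ < δ := by linarith


lemma realPt_shift (ε : ℝ) (V : Set (Fin n → ℝ)) (i : Fin n → unitInterval)
    (A B : Set (Fin n)) (hA : A ⊆ Aset n i) (hB : B ⊆ Bset n i) (z : Fin n → ℤ) :
    realPt (z + (indVec n A - indVec n B)) (psiFlip n (A ∪ B) i) = realPt z i := by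
  funext k
  simp only [realPt, Pi.add_apply, Pi.sub_apply, indVec, psiFlip]
  by_cases hkA : k ∈ A
  · have h1 : (i k : ℝ) = 1 := hA hkA
    have hkB : k ∉ B := fun hkB => by
      have : (i k : ℝ) = 0 := hB hkB
      norm_num [h1] at this
    rw [if_pos hkA, if_neg hkB, if_pos (Set.mem_union_left _ hkA)]
    rw [unitInterval.coe_symm_eq, h1]
    push_cast
    ring
  · by_cases hkB : k ∈ B
    · have h0 : (i k : ℝ) = 0 := hB hkB
      rw [if_neg hkA, if_pos hkB, if_pos (Set.mem_union_right _ hkB)]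
      rw [unitInterval.coe_symm_eq, h0]
      push_cast
      ring
    · rw [if_neg hkA, if_neg hkB, if_neg (by simp [hkA, hkB] : ¬ k ∈ A ∪ B)]
      push_cast
      ring

lemma Gfun_invariant (ε : ℝ) (V : Set (Fin n → ℝ))
    (x y : StoneCech (Fin n → ℤ) × (Fin n → unitInterval)) (hxy : hrel n x y) :
    Gfun ε V x = Gfun ε V y := by
  obtain ⟨A, B, hA, hB, hy1, hy2⟩ := hxy
  obtain ⟨p, i⟩ := x
  simp only at hy1 hy2
  set N := indVec n A - indVec n B with hN
  set j := psiFlip n (A ∪ B) i with hj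
  have key : (fun p => Hext ε V (hshift n N p) j) = fun p => Hext ε V p i := by
    apply denseRange_stoneCechUnit.equalizer
    · exact ((continuous_apply j).comp (continuous_stoneCechExtend _)).comp
        (continuous_stoneCechExtend _)
    · exact (continuous_apply i).comp (continuous_stoneCechExtend _)
    · funext z
      simp only [Function.comp_apply]
      rw [hshift_unit, Hext_unit, Hext_unit]
      show gfun ε V (z + N) j = gfun ε V z i
      simp only [gfun]
      rw [realPt_shift ε V i A B hA hB z]
  have hkey := congrFun key p
  show (Hext ε V p i : ℝ) = (Hext ε V y.1 y.2 : ℝ)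
  rw [hy1, hy2]
  exact congrArg _ hkey.symm

lemma Gfun_embMap (ε : ℝ) (hε : 0 < ε) (V : Set (Fin n → ℝ)) (x : Fin n → ℝ) :
    Gfun ε V (stoneCechUnit (floorVec n x), fracVec n x) = clipf ε V x := by
  show (Hext ε V (stoneCechUnit (floorVec n x)) (fracVec n x) : ℝ) = _
  rw [Hext_unit, gfun_coe ε hε]
  congr 1
  funext k
  simp only [realPt, floorVec, fracVec]
  exact Int.floor_add_fract (x k)

end Separation

open Pointwise in
theorem statement9 (n : ℕ) (hn : 1 ≤ n) (V V' : Set (Fin n → ℝ))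
    (hV : IsClosed V) (hV' : IsClosed V') (ε : ℝ) (hε : 0 < ε)
    (hsep : ({u : Fin n → ℝ | ∀ k, u k ∈ Set.Ioo (-ε) ε} + V) ∩ V' = ∅) :
    closure (embMap n '' V) ∩ closure (embMap n '' V') = ∅ := by
  rcases V.eq_empty_or_nonempty with rfl | hVne
  · simp
  rcases V'.eq_empty_or_nonempty with rfl | hV'ne
  · simp
  set F : Kspace n → ℝ := Quot.lift (Gfun ε V) (Gfun_invariant ε V) with hF
  have hFc : Continuous F := continuous_quot_lift _ (Gfun_cont ε hε V)
  have hdist : ∀ x ∈ V', ε ≤ Metric.infDist x V := by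
    intro x hx
    by_contra hcon
    push_neg at hcon
    obtain ⟨v, hv, hd⟩ := (Metric.infDist_lt_iff hVne).1 hcon
    have hmem : x ∈ ({u : Fin n → ℝ | ∀ k, u k ∈ Set.Ioo (-ε) ε} + V) := by
      rw [Set.mem_add]
      refine ⟨x - v, ?_, v, hv, by funext k; simp⟩
      intro k
      have hk : dist (x k) (v k) ≤ dist x v := dist_le_pi_dist x v k
      rw [Real.dist_eq] at hk
      have habs := abs_lt.1 (lt_of_le_of_lt hk hd)
      simp only [Pi.sub_apply, Set.mem_Ioo]
      constructor <;> linarith [habs.1, habs.2]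
    have : x ∈ ({u : Fin n → ℝ | ∀ k, u k ∈ Set.Ioo (-ε) ε} + V) ∩ V' := ⟨hmem, hx⟩
    rw [hsep] at this
    exact this
  have h0 : ∀ x ∈ V, F (embMap n x) = 0 := by
    intro x hx
    have : F (embMap n x) = clipf ε V x := Gfun_embMap ε hε V x
    rw [this, clipf, Metric.infDist_zero_of_mem hx]
    simp
  have h1 : ∀ x ∈ V', F (embMap n x) = 1 := by
    intro x hx
    have : F (embMap n x) = clipf ε V x := Gfun_embMap ε hε V x
    rw [this, clipf, min_eq_left ((one_le_div hε).2 (hdist x hx))]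
  have c0 : closure (embMap n '' V) ⊆ F ⁻¹' {0} :=
    closure_minimal (by rintro _ ⟨x, hx, rfl⟩; simp [h0 x hx])
      (isClosed_singleton.preimage hFc)
  have c1 : closure (embMap n '' V') ⊆ F ⁻¹' {1} :=
    closure_minimal (by rintro _ ⟨x, hx, rfl⟩; simp [h1 x hx])
      (isClosed_singleton.preimage hFc)
  rw [Set.eq_empty_iff_forall_notMem]
  rintro k ⟨hk0, hk1⟩
  have e0 : F k = 0 := c0 hk0
  have e1 : F k = 1 := c1 hk1
  rw [e0] at e1
  norm_num at e1
end
end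

section
/- (Theorem 3, dynamical content) Let M ⊆ βℤⁿ be a nonempty closed subset invariant under the extended shifts (h_N(M) ⊆ M for all N ∈ ℤⁿ) and minimal for the ℤⁿ-action, i.e., for every p ∈ M the orbit {h_N(p) : N ∈ ℤⁿ} is dense in M. Then the ℝⁿ-system (q(M × Iⁿ), σ) is minimal: for every w ∈ q(M × Iⁿ), the orbit {σ(x, w) : x ∈ ℝⁿ} is dense in q(M × Iⁿ). In particular, q(M × Iⁿ) is the phase space of a minimal subsystem of (ℝⁿ, K, σ). -/
open Set

noncomputable section

lemma nvec_mem (n : ℕ) (i : Fin n → unitInterval) (j : Fin n → ℝ) (k : Fin n)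
    (hb0 : 0 ≤ j k) (hb1 : j k < 1) :
    (i k : ℝ) + j k - (Nvec n i j k : ℝ) ∈ unitInterval := by
  have h1 := (i k).2.1
  have h2 := (i k).2.2
  unfold Nvec
  split_ifs with h <;> refine Set.mem_Icc.mpr ⟨?_, ?_⟩ <;> push_cast <;> linarith

lemma key_frac (n : ℕ) (i i' : Fin n → unitInterval) (hlt : ∀ k, (i' k : ℝ) < 1) (k : Fin n) :
    (i' k : ℝ) = (i k : ℝ) + Int.fract ((i' k : ℝ) - (i k : ℝ))
      - (Nvec n i (fun k => Int.fract ((i' k : ℝ) - (i k : ℝ))) k : ℝ) := by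
  have ha0 := (i k).2.1
  have ha1 := (i k).2.2
  have hb0 := (i' k).2.1
  have hb1 := hlt k
  have hfl : ⌊(i' k : ℝ) - (i k : ℝ)⌋ = -1 ∨ ⌊(i' k : ℝ) - (i k : ℝ)⌋ = 0 := by
    have l1 : (-1 : ℤ) ≤ ⌊(i' k : ℝ) - (i k : ℝ)⌋ := Int.le_floor.mpr (by push_cast; linarith)
    have l2 : ⌊(i' k : ℝ) - (i k : ℝ)⌋ < 1 := Int.floor_lt.mpr (by push_cast; linarith)
    omega
  have hfr : Int.fract ((i' k : ℝ) - (i k : ℝ))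
      = (i' k : ℝ) - (i k : ℝ) - (⌊(i' k : ℝ) - (i k : ℝ)⌋ : ℝ) := rfl
  unfold Nvec
  split_ifs with hif <;> beta_reduce at hif <;> rcases hfl with h | h <;>
    rw [h] at hfr <;> push_cast at hfr hif ⊢ <;> linarith

theorem statement11 (n : ℕ) (hn : 1 ≤ n)
    (σ : (Fin n → ℝ) → Kspace n → Kspace n) (hσ : sigmaSpec n σ)
    (M : Set (StoneCech (Fin n → ℤ))) (hne : M.Nonempty) (hcl : IsClosed M)
    (hinv : ∀ N : Fin n → ℤ, hshift n N '' M ⊆ M)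
    (hmin : ∀ p ∈ M, M ⊆ closure {p' | ∃ N : Fin n → ℤ, hshift n N p = p'}) :
    ∀ w ∈ qmap n '' (M ×ˢ (Set.univ : Set (Fin n → unitInterval))),
      ({w' | ∃ x : Fin n → ℝ, σ x w = w'} ⊆
        qmap n '' (M ×ˢ (Set.univ : Set (Fin n → unitInterval)))) ∧
      (qmap n '' (M ×ˢ (Set.univ : Set (Fin n → unitInterval))) ⊆
        closure {w' | ∃ x : Fin n → ℝ, σ x w = w'}) := by
  rintro w ⟨⟨p, i⟩, ⟨hp, -⟩, rfl⟩
  constructor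
  · rintro w' ⟨x, rfl⟩
    rw [hσ x p i
      (fun k => ⟨(i k : ℝ) + Int.fract (x k) - (Nvec n i (fun k => Int.fract (x k)) k : ℝ),
        nvec_mem n i (fun k => Int.fract (x k)) k (Int.fract_nonneg _) (Int.fract_lt_one _)⟩)
      (fun k => rfl)]
    exact ⟨_, ⟨hinv _ ⟨p, hp, rfl⟩, Set.mem_univ _⟩, rfl⟩
  · rintro w'' ⟨⟨p', i'⟩, ⟨hp', -⟩, rfl⟩
    have hq : qmap n (p', i') =
        qmap n (hshift n (indVec n (Aset n i') - indVec n (∅ : Set (Fin n))) p',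
          psiFlip n (Aset n i' ∪ ∅) i') :=
      Quot.sound ⟨Aset n i', ∅, subset_rfl, Set.empty_subset _, rfl, rfl⟩
    set p2 : StoneCech (Fin n → ℤ) :=
      hshift n (indVec n (Aset n i') - indVec n (∅ : Set (Fin n))) p' with hp2def
    set i2 : Fin n → unitInterval := psiFlip n (Aset n i' ∪ ∅) i' with hi2def
    have hp2M : p2 ∈ M := hinv _ ⟨p', hp', rfl⟩
    have hlt : ∀ k, (i2 k : ℝ) < 1 := by
      intro k
      rw [hi2def]
      unfold psiFlip
      split_ifs with hk
      · have h1 : (i' k : ℝ) = 1 := by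
          rcases hk with hk | hk
          · exact hk
          · exact absurd hk (Set.notMem_empty k)
        simp [unitInterval.symm, h1]
      · have h1 : (i' k : ℝ) ≠ 1 := fun hc => hk (Or.inl hc)
        exact lt_of_le_of_ne (i' k).2.2 h1
    rw [hq]
    rw [mem_closure_iff]
    intro O hO hmemO
    have hpre : IsOpen (qmap n ⁻¹' O) := hO.preimage (continuous_quot_mk)
    obtain ⟨V, W, hV, hW, hpV, hiW, hsub⟩ := isOpen_prod_iff.mp hpre p2 i2 hmemO
    obtain ⟨v, hvV, m, hm⟩ := mem_closure_iff.mp (hmin p hp hp2M) V hV hpV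
    set j : Fin n → ℝ := fun k => Int.fract ((i2 k : ℝ) - (i k : ℝ)) with hjdef
    set N : Fin n → ℤ := Nvec n i j with hNdef
    set x : Fin n → ℝ := fun k => ((m k - N k : ℤ) : ℝ) + j k with hxdef
    have hfx : (fun k => Int.fract (x k)) = j := by
      funext k
      rw [hxdef]
      simp only []
      rw [Int.fract_intCast_add, hjdef]
      exact Int.fract_fract _
    have hflx : floorVec n x + Nvec n i (fun k => Int.fract (x k)) = m := by
      rw [hfx, ← hNdef]
      funext k
      have hj0 : 0 ≤ j k := Int.fract_nonneg _
      have hj1 : j k < 1 := Int.fract_lt_one _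
      have hfl : (floorVec n x) k = m k - N k := by
        unfold floorVec
        rw [hxdef]
        simp only []
        rw [Int.floor_intCast_add]
        have : ⌊j k⌋ = 0 := Int.floor_eq_zero_iff.mpr ⟨hj0, hj1⟩
        omega
      show (floorVec n x) k + N k = m k
      omega
    have hσeq := hσ x p i i2 (by
      intro k
      rw [congrFun hfx k]
      simp only [hfx, hjdef]
      exact key_frac n i i2 hlt k)
    rw [hflx] at hσeq
    refine ⟨qmap n (hshift n m p, i2), ?_, x, hσeq⟩
    have : (hshift n m p, i2) ∈ V ×ˢ W := ⟨hm ▸ hvV, hiW⟩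
    exact hsub this
end
end

section
/- Let M ⊆ βℤⁿ be a nonempty closed subset invariant under the extended shifts (h_N(M) ⊆ M for all N ∈ ℤⁿ). Then M × Iⁿ is saturated for h up to M (the h-class of any point of M × Iⁿ is contained in M × Iⁿ), and the restriction of q induces a homeomorphism from the quotient (M × Iⁿ)/(h restricted to M × Iⁿ) onto the subspace q(M × Iⁿ) of K. -/
open Set

noncomputable section

-- AUX START
namespace St12

variable {n : ℕ}

lemma continuous_hshift (N : Fin n → ℤ) : Continuous (hshift n N) := by
  unfold hshift; exact continuous_stoneCechExtend _

lemma hshift_unit (N z : Fin n → ℤ) :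
    hshift n N (stoneCechUnit z) = stoneCechUnit (z + N) := by
  unfold hshift; exact congrFun (stoneCechExtend_extends _) z

lemma hshift_hshift (N N' : Fin n → ℤ) (p : StoneCech (Fin n → ℤ)) :
    hshift n N (hshift n N' p) = hshift n (N' + N) p := by
  have h : (hshift n N) ∘ (hshift n N') = hshift n (N' + N) :=
    denseRange_stoneCechUnit.equalizer
      ((continuous_hshift N).comp (continuous_hshift N')) (continuous_hshift _)
      (by funext z; simp [Function.comp, hshift_unit, add_assoc])
  exact congrFun h p

lemma hshift_zero (p : StoneCech (Fin n → ℤ)) : hshift n 0 p = p := by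
  have h : hshift n 0 = id :=
    denseRange_stoneCechUnit.equalizer (continuous_hshift 0) continuous_id
      (by funext z; simp [Function.comp, hshift_unit])
  rw [h]; rfl

lemma hrel_equivalence : Equivalence (hrel n) := by
  constructor
  · intro x
    refine ⟨∅, ∅, empty_subset _, empty_subset _, ?_, ?_⟩
    · rw [sub_self, hshift_zero]
    · funext k; simp [psiFlip]
  · rintro x y ⟨A, B, hA, hB, h1, h2⟩
    refine ⟨B, A, ?_, ?_, ?_, ?_⟩
    · intro k hk
      have h0 : (x.2 k : ℝ) = 0 := hB hk
      have : y.2 k = unitInterval.symm (x.2 k) := by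
        rw [h2]; simp [psiFlip, Set.mem_union, hk]
      show (y.2 k : ℝ) = 1
      rw [this, unitInterval.coe_symm_eq, h0]; ring
    · intro k hk
      have h0 : (x.2 k : ℝ) = 1 := hA hk
      have : y.2 k = unitInterval.symm (x.2 k) := by
        rw [h2]; simp [psiFlip, Set.mem_union, hk]
      show (y.2 k : ℝ) = 0
      rw [this, unitInterval.coe_symm_eq, h0]; ring
    · rw [h1, hshift_hshift]
      have : indVec n A - indVec n B + (indVec n B - indVec n A) = 0 := by ring
      rw [this, hshift_zero]
    · rw [h2]
      funext k
      by_cases h : k ∈ A ∪ B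
      · have h' : k ∈ B ∪ A := Set.union_comm A B ▸ h
        simp [psiFlip, h, h', unitInterval.symm_symm]
      · have h' : k ∉ B ∪ A := fun hc => h (Set.union_comm B A ▸ hc)
        simp [psiFlip, h, h']
  · rintro x y z ⟨A, B, hA, hB, h1, h2⟩ ⟨A', B', hA', hB', h1', h2'⟩
    classical
    -- pointwise values
    have hyA : ∀ k ∈ A, (y.2 k : ℝ) = 0 := by
      intro k hk
      have hx1 : (x.2 k : ℝ) = 1 := hA hk
      rw [h2]
      simp [psiFlip, Set.mem_union, hk, unitInterval.coe_symm_eq, hx1]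
    have hyB : ∀ k ∈ B, (y.2 k : ℝ) = 1 := by
      intro k hk
      have hx0 : (x.2 k : ℝ) = 0 := hB hk
      rw [h2]
      simp [psiFlip, Set.mem_union, hk, unitInterval.coe_symm_eq, hx0]
    have hyO : ∀ k, k ∉ A ∪ B → y.2 k = x.2 k := by
      intro k hk; rw [h2]; simp [psiFlip, hk]
    -- disjointness facts
    have cAB : ∀ k, k ∈ A → k ∈ B → False := by
      intro k h1k h2k
      have e1 : (x.2 k : ℝ) = 1 := hA h1k
      have e2 : (x.2 k : ℝ) = 0 := hB h2k
      linarith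
    have cAB' : ∀ k, k ∈ A' → k ∈ B' → False := by
      intro k h1k h2k
      have e1 : (y.2 k : ℝ) = 1 := hA' h1k
      have e2 : (y.2 k : ℝ) = 0 := hB' h2k
      linarith
    have cAA' : ∀ k, k ∈ A → k ∈ A' → False := by
      intro k h1k h2k
      have e1 : (y.2 k : ℝ) = 0 := hyA k h1k
      have e2 : (y.2 k : ℝ) = 1 := hA' h2k
      linarith
    have cBB' : ∀ k, k ∈ B → k ∈ B' → False := by
      intro k h1k h2k
      have e1 : (y.2 k : ℝ) = 1 := hyB k h1k
      have e2 : (y.2 k : ℝ) = 0 := hB' h2k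
      linarith
    refine ⟨(A \ B') ∪ (A' \ (A ∪ B)), (B \ A') ∪ (B' \ (A ∪ B)), ?_, ?_, ?_, ?_⟩
    · rintro k (hk | hk)
      · exact hA hk.1
      · have := hA' hk.1
        have := hyO k hk.2
        show (x.2 k : ℝ) = 1
        rw [← this]; exact hA' hk.1
    · rintro k (hk | hk)
      · exact hB hk.1
      · have := hyO k hk.2
        show (x.2 k : ℝ) = 0
        rw [← this]; exact hB' hk.1
    · rw [h1', h1, hshift_hshift]
      congr 1
      funext k
      by_cases k1 : k ∈ A <;> by_cases k2 : k ∈ B <;> by_cases k3 : k ∈ A' <;>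
        by_cases k4 : k ∈ B' <;>
        first
          | exact (cAB k ‹_› ‹_›).elim
          | exact (cAB' k ‹_› ‹_›).elim
          | exact (cAA' k ‹_› ‹_›).elim
          | exact (cBB' k ‹_› ‹_›).elim
          | simp [indVec, Set.mem_union, Set.mem_diff, k1, k2, k3, k4]
    · rw [h2', h2]
      funext k
      by_cases k1 : k ∈ A <;> by_cases k2 : k ∈ B <;> by_cases k3 : k ∈ A' <;>
        by_cases k4 : k ∈ B' <;>
        first
          | exact (cAB k ‹_› ‹_›).elim
          | exact (cAB' k ‹_› ‹_›).elim
          | exact (cAA' k ‹_› ‹_›).elim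
          | exact (cBB' k ‹_› ‹_›).elim
          | simp [psiFlip, Set.mem_union, Set.mem_diff, k1, k2, k3, k4,
              unitInterval.symm_symm]

lemma qmap_eq_iff (x y : StoneCech (Fin n → ℤ) × (Fin n → unitInterval)) :
    qmap n x = qmap n y ↔ hrel n x y := by
  rw [Quot.eq]
  exact (hrel_equivalence (n := n)).eqvGen_iff

lemma continuous_psiFlip (S : Set (Fin n)) :
    Continuous (fun i : Fin n → unitInterval => psiFlip n S i) := by
  classical
  refine continuous_pi fun k => ?_
  by_cases h : k ∈ S <;> simp only [psiFlip, h, if_true, if_false]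
  · exact unitInterval.continuous_symm.comp (continuous_apply k)
  · exact continuous_apply k

lemma isClosedMap_qmap : IsClosedMap (qmap n) := by
  classical
  intro C hC
  rw [← (isQuotientMap_quot_mk (r := hrel n)).isClosed_preimage]
  have heq : qmap n ⁻¹' (qmap n '' C) =
      ⋃ (A : Set (Fin n)) (B : Set (Fin n)),
        (fun x : StoneCech (Fin n → ℤ) × (Fin n → unitInterval) =>
          (hshift n (indVec n A - indVec n B) x.1, psiFlip n (A ∪ B) x.2)) ''
          (C ∩ ({x | A ⊆ Aset n x.2} ∩ {x | B ⊆ Bset n x.2})) := by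
    ext y
    simp only [Set.mem_preimage, Set.mem_image, Set.mem_iUnion, Set.mem_inter_iff,
      Set.mem_setOf_eq]
    constructor
    · rintro ⟨x, hx, hxy⟩
      obtain ⟨A, B, hA, hB, h1, h2⟩ := (qmap_eq_iff x y).1 hxy
      exact ⟨A, B, x, ⟨hx, hA, hB⟩, by rw [← h1, ← h2]⟩
    · rintro ⟨A, B, x, ⟨hx, hA, hB⟩, hxy⟩
      refine ⟨x, hx, (qmap_eq_iff x y).2 ⟨A, B, hA, hB, ?_, ?_⟩⟩
      · rw [← hxy]
      · rw [← hxy]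
  rw [heq]
  refine isClosed_iUnion_of_finite fun A => isClosed_iUnion_of_finite fun B => ?_
  have hcont : Continuous (fun x : StoneCech (Fin n → ℤ) × (Fin n → unitInterval) =>
      (hshift n (indVec n A - indVec n B) x.1, psiFlip n (A ∪ B) x.2)) :=
    ((continuous_hshift _).comp continuous_fst).prodMk
      ((continuous_psiFlip _).comp continuous_snd)
  have hAcl : IsClosed {x : StoneCech (Fin n → ℤ) × (Fin n → unitInterval) |
      A ⊆ Aset n x.2} := by
    have : {x : StoneCech (Fin n → ℤ) × (Fin n → unitInterval) | A ⊆ Aset n x.2} =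
        ⋂ k ∈ A, {x | (x.2 k : ℝ) = 1} := by
      ext x; simp [Aset, Set.subset_def]
    rw [this]
    exact isClosed_biInter fun k _ => isClosed_eq
      (continuous_subtype_val.comp ((continuous_apply k).comp continuous_snd))
      continuous_const
  have hBcl : IsClosed {x : StoneCech (Fin n → ℤ) × (Fin n → unitInterval) |
      B ⊆ Bset n x.2} := by
    have : {x : StoneCech (Fin n → ℤ) × (Fin n → unitInterval) | B ⊆ Bset n x.2} =
        ⋂ k ∈ B, {x | (x.2 k : ℝ) = 0} := by
      ext x; simp [Bset, Set.subset_def]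
    rw [this]
    exact isClosed_biInter fun k _ => isClosed_eq
      (continuous_subtype_val.comp ((continuous_apply k).comp continuous_snd))
      continuous_const
  have hcomp : IsCompact (C ∩ ({x | A ⊆ Aset n x.2} ∩ {x | B ⊆ Bset n x.2})) :=
    (hC.inter (hAcl.inter hBcl)).isCompact
  exact (hcomp.image hcont).isClosed

end St12

/-- The subspace `M × Iⁿ` of `βℤⁿ × Iⁿ`. -/
def Msub (n : ℕ) (M : Set (StoneCech (Fin n → ℤ))) : Type _ :=
  {y : StoneCech (Fin n → ℤ) × (Fin n → unitInterval) // y.1 ∈ M}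

instance (n : ℕ) (M : Set (StoneCech (Fin n → ℤ))) : TopologicalSpace (Msub n M) :=
  instTopologicalSpaceSubtype

/-- The restriction of `h` to `M × Iⁿ`. -/
def relM (n : ℕ) (M : Set (StoneCech (Fin n → ℤ))) (a b : Msub n M) : Prop :=
  hrel n a.1 b.1

namespace St12

def F0 (n : ℕ) (M : Set (StoneCech (Fin n → ℤ))) (a : Msub n M) :
    (qmap n '' (M ×ˢ (Set.univ : Set (Fin n → unitInterval))) : Set (Kspace n)) :=
  ⟨qmap n a.1, ⟨a.1, ⟨a.2, trivial⟩, rfl⟩⟩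

lemma F0_sound {n : ℕ} {M : Set (StoneCech (Fin n → ℤ))} (a b : Msub n M)
    (h : relM n M a b) : F0 n M a = F0 n M b :=
  Subtype.ext (Quot.sound h)

def Fq (n : ℕ) (M : Set (StoneCech (Fin n → ℤ))) :
    Quot (relM n M) →
      (qmap n '' (M ×ˢ (Set.univ : Set (Fin n → unitInterval))) : Set (Kspace n)) :=
  Quot.lift (F0 n M) F0_sound

lemma Fq_cont (n : ℕ) (M : Set (StoneCech (Fin n → ℤ))) : Continuous (Fq n M) := by
  apply continuous_quot_lift
  have h0 : Continuous fun a : Msub n M => a.1 := continuous_subtype_val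
  have h : Continuous fun a : Msub n M => qmap n a.1 :=
    continuous_quot_mk.comp h0
  exact h.subtype_mk _

end St12

theorem statement12 (n : ℕ) (hn : 1 ≤ n)
    (M : Set (StoneCech (Fin n → ℤ))) (hne : M.Nonempty) (hcl : IsClosed M)
    (hinv : ∀ N : Fin n → ℤ, hshift n N '' M ⊆ M) :
    (∀ a : StoneCech (Fin n → ℤ) × (Fin n → unitInterval), a.1 ∈ M →
      ∀ b, hrel n a b → b.1 ∈ M) ∧
    ∃ φ : Quot (relM n M) ≃ₜ
        (qmap n '' (M ×ˢ (Set.univ : Set (Fin n → unitInterval))) : Set (Kspace n)),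
      ∀ a : Msub n M, (φ (Quot.mk (relM n M) a) : Kspace n) = qmap n a.1 := by
  classical
  have sat : ∀ a : StoneCech (Fin n → ℤ) × (Fin n → unitInterval), a.1 ∈ M →
      ∀ b, hrel n a b → b.1 ∈ M := by
    rintro a ha b ⟨A, B, -, -, h1, -⟩
    rw [h1]
    exact hinv _ ⟨a.1, ha, rfl⟩
  refine ⟨sat, ?_⟩
  have memS : ∀ x : StoneCech (Fin n → ℤ) × (Fin n → unitInterval),
      x ∈ M ×ˢ (Set.univ : Set (Fin n → unitInterval)) ↔ x.1 ∈ M := by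
    intro x; simp [Set.mem_prod]
  have Fbij : Function.Bijective (St12.Fq n M) := by
    constructor
    · rintro ⟨a⟩ ⟨b⟩ h
      have hv : qmap n a.1 = qmap n b.1 := congrArg Subtype.val h
      exact Quot.sound ((St12.qmap_eq_iff a.1 b.1).1 hv)
    · rintro ⟨s, x, hx, rfl⟩
      exact ⟨Quot.mk _ ⟨x, (memS x).1 hx⟩, rfl⟩
  have Fopen : IsOpenMap (St12.Fq n M) := by
    intro U hU
    set W : Set (Msub n M) := Quot.mk (relM n M) ⁻¹' U with hWdef
    have hW : IsOpen W := hU.preimage continuous_quot_mk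
    set W' : Set (StoneCech (Fin n → ℤ) × (Fin n → unitInterval)) :=
      Subtype.val '' W with hW'def
    have hWsat : ∀ a ∈ W, ∀ b, relM n M a b → b ∈ W := by
      intro a ha b h
      have : Quot.mk (relM n M) a = Quot.mk (relM n M) b := Quot.sound h
      simpa [hWdef, ← this] using ha
    have hScl : IsClosed {y : StoneCech (Fin n → ℤ) × (Fin n → unitInterval) | y.1 ∈ M} :=
      hcl.preimage continuous_fst
    set C : Set (StoneCech (Fin n → ℤ) × (Fin n → unitInterval)) :=
      (M ×ˢ (Set.univ : Set (Fin n → unitInterval))) \ W' with hCdef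
    have hCval : C = Subtype.val '' (Wᶜ : Set (Msub n M)) := by
      ext x
      simp only [hCdef, Set.mem_diff, hW'def, Set.mem_image, Set.mem_compl_iff, memS x]
      constructor
      · rintro ⟨hx1, hx2⟩
        exact ⟨⟨x, hx1⟩, fun hc => hx2 ⟨⟨x, hx1⟩, hc, rfl⟩, rfl⟩
      · rintro ⟨w, hw, rfl⟩
        refine ⟨w.2, fun hc => ?_⟩
        obtain ⟨w', hw', hww⟩ := hc
        exact hw (by rwa [Subtype.val_injective hww] at hw')
    have hCcl : IsClosed C := by
      rw [hCval]
      exact (IsClosed.isClosedMap_subtype_val hScl) _ hW.isClosed_compl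
    have key : St12.Fq n M '' U = Subtype.val ⁻¹' ((qmap n '' C)ᶜ) := by
      ext s
      constructor
      · rintro ⟨u, hu, rfl⟩
        obtain ⟨a⟩ := u
        intro hmem
        obtain ⟨c, hcC, hc⟩ := hmem
        have hrel_ac : hrel n a.1 c :=
          St12.hrel_equivalence.symm ((St12.qmap_eq_iff c a.1).1 hc)
        have hcM : c.1 ∈ M := sat a.1 a.2 c hrel_ac
        have hcW : (⟨c, hcM⟩ : Msub n M) ∈ W := hWsat a hu _ hrel_ac
        exact hcC.2 ⟨⟨c, hcM⟩, hcW, rfl⟩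
      · intro hs
        obtain ⟨x, hxS, hxq⟩ := s.2
        have hxW' : x ∈ W' := by
          by_contra hx
          exact hs ⟨x, ⟨hxS, hx⟩, hxq⟩
        obtain ⟨w, hwW, rfl⟩ := hxW'
        exact ⟨Quot.mk _ w, hwW, Subtype.ext hxq⟩
    rw [key]
    exact ((St12.isClosedMap_qmap C hCcl).isOpen_compl).preimage continuous_subtype_val
  refine ⟨Equiv.toHomeomorphOfContinuousOpen (Equiv.ofBijective _ Fbij)
    (St12.Fq_cont n M) Fopen, fun a => rfl⟩
end
end
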